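/- arXiv:1202.1788 — 2 statements merged into one kernel-verified Lean document; each statement's English description precedes it below -/
import Mathlib

section
/- Let P be a half-stationary product measure on X = {0,1}^ℤ for which the shift T is nonsingular. Define ψ_φ : X⁺ → ℝ for P⁺-a.e. x by ψ_φ(x) = ∑_{n=0}^{φ(x)−1} [ φ(σⁿx) − φ(σⁿ(τx)) ], where φ(x) := ∑_{k=1}^∞ log( P_{k−1}(x_k)/P_k(x_k) ) (this series converges for P⁺-a.e. x), σ is the one-sided left shift (σx)_k = x_{k+1}, and φ(x) in the summation limit denotes min{n ≥ 1 : x_n = 0}. Then for P⁺-a.e. x, ψ_φ(x) = log τ'(x). -/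
open MeasureTheory Filter Topology
open scoped ENNReal

noncomputable section

namespace NSB

/-- The two-sided shift by `n` on `X = {0,1}^ℤ` (with `Bool`: `false` = 0, `true` = 1):
`(shift n x) k = x (k + n)`.  The shift `T` of the paper is `shift 1`. -/
def shift (n : ℤ) (x : ℤ → Bool) : ℤ → Bool := fun k => x (k + n)

/-- `P` is the product probability measure `∏_{k ∈ ℤ} P_k` on `{0,1}^ℤ` with marginals `p`,
where `p k b` is the probability that coordinate `k` equals `b`. -/
def IsProductMeasure (P : Measure (ℤ → Bool)) (p : ℤ → Bool → ℝ) : Prop :=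
  IsProbabilityMeasure P ∧
  (∀ k b, 0 ≤ p k b) ∧ (∀ k, p k false + p k true = 1) ∧
  ∀ (s : Finset ℤ) (y : ℤ → Bool),
    P {x | ∀ i ∈ s, x i = y i} = ∏ i ∈ s, ENNReal.ofReal (p i (y i))

/-- Half-stationarity (with `p = 1/2`): `P_k(0) = P_k(1) = 1/2` for all `k ≤ 0`. -/
def HalfStationary (p : ℤ → Bool → ℝ) : Prop :=
  ∀ k : ℤ, k ≤ 0 → p k false = 1 / 2

/-- The shift is nonsingular with respect to `P` : `P` and the pushforward of `P`
under the shift are mutually absolutely continuous. -/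
def Nonsingular (P : Measure (ℤ → Bool)) : Prop :=
  P ≪ P.map (shift 1) ∧ P.map (shift 1) ≪ P

/-- `rnd P n = T^{n'} = d(P∘Tⁿ)/dP`, where `(P∘Tⁿ)(A) := P(Tⁿ A) = (P.map (shift (-n))) A`
(the shift is invertible with inverse `shift (-1)`). -/
def rnd (P : Measure (ℤ → Bool)) (n : ℕ) : (ℤ → Bool) → ℝ≥0∞ :=
  (P.map (shift (-(n : ℤ)))).rnDeriv P

/-- Conservativity via Hopf's criterion: `∑_{n ≥ 1} T^{n'}(x) = ∞` for `P`-a.e. `x`. -/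
def Conservative (P : Measure (ℤ → Bool)) : Prop :=
  ∀ᵐ x ∂P, ∑' n : ℕ, rnd P (n + 1) x = ⊤

/-- Dissipativity: `∑_{n ≥ 1} T^{n'}(x) < ∞` for `P`-a.e. `x`. -/
def Dissipative (P : Measure (ℤ → Bool)) : Prop :=
  ∀ᵐ x ∂P, ∑' n : ℕ, rnd P (n + 1) x ≠ ⊤

/-- Ergodicity of the shift with respect to `P`. -/
def ErgodicShift (P : Measure (ℤ → Bool)) : Prop :=
  ∀ A : Set (ℤ → Bool), MeasurableSet A → shift 1 ⁻¹' A = A → P A = 0 ∨ P A = 1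

/-- Existence of an absolutely continuous invariant probability:
a probability `ν` with `ν∘T⁻¹ = ν` which is mutually absolutely continuous with `P`. -/
def HasACIP (P : Measure (ℤ → Bool)) : Prop :=
  ∃ ν : Measure (ℤ → Bool),
    IsProbabilityMeasure ν ∧ ν.map (shift 1) = ν ∧ ν ≪ P ∧ P ≪ ν

/-- The measure `m = e^s ds` on `ℝ`. -/
def expM : Measure ℝ := volume.withDensity fun s => ENNReal.ofReal (Real.exp s)

/-- The Maharam extension `T̃(x,s) = (Tx, s + log T^{1'}(x))` of the shift. -/
def maharam (P : Measure (ℤ → Bool)) : (ℤ → Bool) × ℝ → (ℤ → Bool) × ℝ :=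
  fun q => (shift 1 q.1, q.2 + Real.log ((rnd P 1 q.1).toReal))

/-- The inverse of the Maharam extension of the shift. -/
def maharamInv (P : Measure (ℤ → Bool)) : (ℤ → Bool) × ℝ → (ℤ → Bool) × ℝ :=
  fun q => (shift (-1) q.1, q.2 - Real.log ((rnd P 1 (shift (-1) q.1)).toReal))

/-- The Kakutani–Hellinger distance
`d(P, T_*ⁿP) = ∑_{i ∈ ℤ} [(√P_i(0) − √P_{i−n}(0))² + (√P_i(1) − √P_{i−n}(1))²]`. -/
def dHell (p : ℤ → Bool → ℝ) (n : ℕ) : ℝ :=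
  ∑' i : ℤ, ((Real.sqrt (p i false) - Real.sqrt (p (i - (n : ℤ)) false)) ^ 2 +
    (Real.sqrt (p i true) - Real.sqrt (p (i - (n : ℤ)) true)) ^ 2)

/-! ### The one-sided space `X⁺`

`X⁺ = {0,1}^{ℕ ≥ 1}` is realized as `ℕ → Bool`, where the index `i : ℕ` corresponds
to the coordinate `i + 1` of the paper (so the marginal of index `i` is `P_{i+1}`). -/

/-- `Q` is the product probability measure on `{0,1}^ℕ` with marginals `q`. -/
def IsProductMeasureN (Q : Measure (ℕ → Bool)) (q : ℕ → Bool → ℝ) : Prop :=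
  IsProbabilityMeasure Q ∧
  (∀ k b, 0 ≤ q k b) ∧ (∀ k, q k false + q k true = 1) ∧
  ∀ (s : Finset ℕ) (y : ℕ → Bool),
    Q {x | ∀ i ∈ s, x i = y i} = ∏ i ∈ s, ENNReal.ofReal (q i (y i))

/-- The binary odometer (adding machine) `τ`: the first `false` coordinate is turned
into `true` and all (`true`) coordinates before it are turned into `false`;
on the (a.e. irrelevant) all-`true` sequence we let `τ` be the identity. -/
def odometer (x : ℕ → Bool) : ℕ → Bool :=
  haveI := Classical.propDecidable (∃ n, x n = false)
  if h : ∃ n, x n = false then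
    fun i => if i < Nat.find h then false else if i = Nat.find h then true else x i
  else x

/-- The inverse `τ⁻¹` of the binary odometer (defined analogously, a.e. inverse to `τ`). -/
def odometerInv (x : ℕ → Bool) : ℕ → Bool :=
  haveI := Classical.propDecidable (∃ n, x n = true)
  if h : ∃ n, x n = true then
    fun i => if i < Nat.find h then true else if i = Nat.find h then false else x i
  else x

/-- `rndOdo Q n = d(P⁺∘τⁿ)/dP⁺`, where `(P⁺∘τⁿ)(A) := P⁺(τⁿ A) = (Q.map (τ⁻¹ ^[n])) A`. -/
def rndOdo (Q : Measure (ℕ → Bool)) (n : ℕ) : (ℕ → Bool) → ℝ≥0∞ :=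
  (Q.map (odometerInv^[n])).rnDeriv Q

/-- The one-sided shift `σ` on `X⁺`. -/
def oneShift (y : ℕ → Bool) : ℕ → Bool := fun i => y (i + 1)

/-- The Radon–Nikodym derivative of the odometer,
`τ'(x) = (P_{φ(x)}(1)/P_{φ(x)}(0)) · ∏_{k=1}^{φ(x)−1} P_k(0)/P_k(1)`,
where `φ(x) = min {n ≥ 1 : x_n = 0}` (in our indexing, `φ(x) = Nat.find h + 1`). -/
def tauDeriv (p : ℤ → Bool → ℝ) (x : ℕ → Bool) : ℝ :=
  haveI := Classical.propDecidable (∃ n, x n = false)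
  if h : ∃ n, x n = false then
    (p ((Nat.find h : ℤ) + 1) true / p ((Nat.find h : ℤ) + 1) false) *
      ∏ i ∈ Finset.range (Nat.find h), (p ((i : ℤ) + 1) false / p ((i : ℤ) + 1) true)
  else 1

/-- The Maharam extension `τ̃(x,s) = (τx, s + log τ'(x))` of the odometer. -/
def maharamOdo (p : ℤ → Bool → ℝ) : (ℕ → Bool) × ℝ → (ℕ → Bool) × ℝ :=
  fun q => (odometer q.1, q.2 + Real.log (tauDeriv p q.1))

/-- The function `φ(x) := ∑_{k=1}^∞ log (P_{k−1}(x_k)/P_k(x_k))` (denoted `Phi` here),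
defined as the limit of the partial sums (junk value if the series diverges);
in our indexing the `k`-th term is `log (P_i(x_{i+1})/P_{i+1}(x_{i+1}))` with `i = k − 1`. -/
def Phi (p : ℤ → Bool → ℝ) (y : ℕ → Bool) : ℝ :=
  limUnder atTop fun M : ℕ =>
    ∑ i ∈ Finset.range M, Real.log (p (i : ℤ) (y i) / p ((i : ℤ) + 1) (y i))

/-! ### Cylinders on `ℕ → Bool` -/

lemma measurableSet_cylN (s : Finset ℕ) (y : ℕ → Bool) :
    MeasurableSet {x : ℕ → Bool | ∀ i ∈ s, x i = y i} := by
  have h : {x : ℕ → Bool | ∀ i ∈ s, x i = y i}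
      = ⋂ i ∈ s, (fun x : ℕ → Bool => x i) ⁻¹' {y i} := by
    ext x; simp
  rw [h]
  exact MeasurableSet.biInter s.countable_toSet fun i _ =>
    (measurable_pi_apply i) (measurableSet_singleton _)

def cylsN : Set (Set (ℕ → Bool)) :=
  {A | ∃ (s : Finset ℕ) (y : ℕ → Bool), A = {x | ∀ i ∈ s, x i = y i}}

lemma isPiSystem_cylsN : IsPiSystem cylsN := by
  rintro _ ⟨s₁, y₁, rfl⟩ _ ⟨s₂, y₂, rfl⟩ ⟨x₀, hx₁, hx₂⟩
  refine ⟨s₁ ∪ s₂, x₀, ?_⟩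
  ext x
  simp only [Set.mem_inter_iff, Set.mem_setOf_eq, Finset.mem_union]
  constructor
  · rintro ⟨h1, h2⟩ i hi
    rcases hi with hi | hi
    · rw [h1 i hi]; exact (hx₁ i hi).symm
    · rw [h2 i hi]; exact (hx₂ i hi).symm
  · intro hx
    exact ⟨fun i hi => (hx i (Or.inl hi)).trans (hx₁ i hi),
      fun i hi => (hx i (Or.inr hi)).trans (hx₂ i hi)⟩

lemma generateFrom_cylsN :
    MeasurableSpace.generateFrom cylsN = (inferInstance : MeasurableSpace (ℕ → Bool)) := by
  refine le_antisymm (MeasurableSpace.generateFrom_le ?_) ?_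
  · rintro _ ⟨s, y, rfl⟩
    exact measurableSet_cylN s y
  · have hpi : (inferInstance : MeasurableSpace (ℕ → Bool))
        = ⨆ i : ℕ, MeasurableSpace.comap (fun x : ℕ → Bool => x i) inferInstance := rfl
    refine le_trans (le_of_eq hpi) (iSup_le fun i => ?_)
    have hsing : ∀ b : Bool, MeasurableSet[MeasurableSpace.generateFrom cylsN]
        ((fun x : ℕ → Bool => x i) ⁻¹' {b}) := by
      intro b
      have h : ((fun x : ℕ → Bool => x i) ⁻¹' {b})
          = {x : ℕ → Bool | ∀ j ∈ ({i} : Finset ℕ), x j = (fun _ => b) j} := by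
        ext x; simp
      rw [h]
      exact MeasurableSpace.measurableSet_generateFrom ⟨{i}, fun _ => b, rfl⟩
    have hmeas : @Measurable (ℕ → Bool) Bool (MeasurableSpace.generateFrom cylsN) _
        (fun x : ℕ → Bool => x i) :=
      @measurable_to_countable Bool (ℕ → Bool) _ _ (MeasurableSpace.generateFrom cylsN)
        _ (fun y => hsing _)
    exact hmeas.comap_le

lemma productMeasureN_unique {Q Q' : Measure (ℕ → Bool)} {q : ℕ → Bool → ℝ}
    (h : IsProductMeasureN Q q) (h' : IsProductMeasureN Q' q) : Q = Q' := by
  haveI := h.1; haveI := h'.1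
  refine ext_of_generate_finite cylsN generateFrom_cylsN.symm isPiSystem_cylsN ?_ ?_
  · rintro _ ⟨s, y, rfl⟩
    rw [h.2.2.2 s y, h'.2.2.2 s y]
  · simp

/-! ### The filtration of finite coordinates -/

def projN (N : ℕ) (x : ℕ → Bool) : Fin N → Bool := fun i => x i

lemma measurable_projN (N : ℕ) : Measurable (projN N) :=
  measurable_pi_lambda _ fun i => measurable_pi_apply _

lemma measurableSet_finPi {N : ℕ} (S : Set (Fin N → Bool)) : MeasurableSet S := by
  have h1 : ∀ y : Fin N → Bool, MeasurableSet ({y} : Set (Fin N → Bool)) := by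
    intro y
    have h : ({y} : Set (Fin N → Bool)) = ⋂ i, (fun z : Fin N → Bool => z i) ⁻¹' {y i} := by
      ext z; simp [funext_iff, eq_comm]
    rw [h]
    exact MeasurableSet.iInter fun i => (measurable_pi_apply i) (measurableSet_singleton _)
  have h2 : S = ⋃ y ∈ S, ({y} : Set (Fin N → Bool)) := by simp
  rw [h2]
  exact MeasurableSet.biUnion S.to_countable fun y _ => h1 y

lemma measurable_from_finPi {N : ℕ} {β : Type*} [MeasurableSpace β]
    (g : (Fin N → Bool) → β) : Measurable g := fun _ _ => measurableSet_finPi _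

def filtN : Filtration ℕ (inferInstance : MeasurableSpace (ℕ → Bool)) where
  seq N := MeasurableSpace.comap (projN N) inferInstance
  mono' := by
    intro N M hNM
    dsimp only
    have h : projN N
        = (fun y : Fin M → Bool => fun i : Fin N => y (Fin.castLE hNM i)) ∘ projN M := rfl
    rw [h, ← MeasurableSpace.comap_comp]
    exact MeasurableSpace.comap_mono
      (measurable_pi_lambda _ fun i => measurable_pi_apply _).comap_le
  le' N := (measurable_projN N).comap_le

lemma iSup_filtN :
    (⨆ N, (filtN N : MeasurableSpace (ℕ → Bool)))
      = (inferInstance : MeasurableSpace (ℕ → Bool)) := by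
  refine le_antisymm (iSup_le fun N => filtN.le N) ?_
  have hpi : (inferInstance : MeasurableSpace (ℕ → Bool))
      = ⨆ i : ℕ, MeasurableSpace.comap (fun x : ℕ → Bool => x i) inferInstance := rfl
  refine le_trans (le_of_eq hpi) (iSup_le fun i => ?_)
  refine le_trans ?_ (le_iSup (fun N => (filtN N : MeasurableSpace (ℕ → Bool))) (i + 1))
  have h : (fun x : ℕ → Bool => x i)
      = (fun y : Fin (i + 1) → Bool => y ⟨i, Nat.lt_succ_self i⟩) ∘ projN (i + 1) := rfl
  rw [h, ← MeasurableSpace.comap_comp]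
  exact MeasurableSpace.comap_mono (measurable_pi_apply _).comap_le

lemma measure_projN_preimage_singleton {Q : Measure (ℕ → Bool)} {q : ℕ → Bool → ℝ}
    (hQ : IsProductMeasureN Q q) (N : ℕ) (y : Fin N → Bool) :
    Q (projN N ⁻¹' {y}) = ∏ i : Fin N, ENNReal.ofReal (q i (y i)) := by
  classical
  set z : ℕ → Bool := fun j => if h : j < N then y ⟨j, h⟩ else false with hz
  have hzi : ∀ (i : ℕ) (hi : i < N), z i = y ⟨i, hi⟩ := fun i hi => dif_pos hi
  have hset : projN N ⁻¹' {y}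
      = {x : ℕ → Bool | ∀ i ∈ Finset.range N, x i = z i} := by
    ext x
    simp only [Set.mem_preimage, Set.mem_singleton_iff, Set.mem_setOf_eq, funext_iff,
      Finset.mem_range, projN]
    constructor
    · intro hx i hi
      rw [hzi i hi]
      exact hx ⟨i, hi⟩
    · intro hx i
      have := hx i.1 i.2
      rwa [hzi i.1 i.2, Fin.eta] at this
  rw [hset, hQ.2.2.2, ← Fin.prod_univ_eq_prod_range
    (fun j => ENNReal.ofReal (q j (z j))) N]
  exact Finset.prod_congr rfl fun i _ => by rw [hzi i.1 i.2, Fin.eta]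

/-! ### The martingale convergence core lemma -/

lemma core {Q Q' : Measure (ℕ → Bool)} {q q' : ℕ → Bool → ℝ}
    (hQ : IsProductMeasureN Q q) (hQ' : IsProductMeasureN Q' q')
    (hq : ∀ i b, 0 < q i b) (hq' : ∀ i b, 0 < q' i b)
    (h1 : Q' ≪ Q) (h2 : Q ≪ Q') :
    ∀ᵐ x ∂Q, ∃ L : ℝ,
      Tendsto (fun N : ℕ => ∑ i ∈ Finset.range N, Real.log (q' i (x i) / q i (x i)))
        atTop (𝓝 L) := by
  classical
  haveI := hQ.1
  haveI := hQ'.1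
  set D : (ℕ → Bool) → ℝ := fun x => (Q'.rnDeriv Q x).toReal with hD
  have hDint : Integrable D Q := Measure.integrable_toReal_rnDeriv
  set M : ℕ → (ℕ → Bool) → ℝ :=
    fun N x => ∏ i ∈ Finset.range N, (q' i (x i) / q i (x i)) with hMdef
  -- measurability of `M N` with respect to `filtN N`
  have hMfun : ∀ N, M N = (fun y : Fin N → Bool =>
      ∏ i : Fin N, (q' i (y i) / q i (y i))) ∘ projN N := by
    intro N
    funext x
    rw [hMdef]
    exact (Fin.prod_univ_eq_prod_range (fun j => q' j (x j) / q j (x j)) N).symm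
  have hMmeasF : ∀ N, @Measurable _ _ (filtN N) _ (M N) := by
    intro N
    rw [hMfun N]
    exact (measurable_from_finPi _).comp (Measurable.of_comap_le le_rfl)
  have hMmeas : ∀ N, Measurable (M N) := fun N => (hMmeasF N).mono (filtN.le N) le_rfl
  -- integrability of `M N`
  have hMnn : ∀ N x, 0 ≤ M N x := fun N x =>
    Finset.prod_nonneg fun i _ => (div_pos (hq' _ _) (hq _ _)).le
  have hMint : ∀ N, Integrable (M N) Q := by
    intro N
    refine Integrable.mono' (integrable_const
      (∏ i ∈ Finset.range N, max (q' i false / q i false) (q' i true / q i true)))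
      (hMmeas N).aestronglyMeasurable (ae_of_all _ fun x => ?_)
    rw [Real.norm_eq_abs, abs_of_nonneg (hMnn N x)]
    refine Finset.prod_le_prod (fun i _ => (div_pos (hq' _ _) (hq _ _)).le) (fun i _ => ?_)
    cases hxi : x i
    · exact le_max_left _ _
    · exact le_max_right _ _
  -- the integral identity on `filtN N`-measurable sets
  have h_eq : ∀ N : ℕ, ∀ s : Set (ℕ → Bool), MeasurableSet[filtN N] s →
      ∫ x in s, M N x ∂Q = ∫ x in s, D x ∂Q := by
    intro N s hs
    obtain ⟨S, -, rfl⟩ := MeasurableSpace.measurableSet_comap.1 hs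
    rw [hD]
    rw [Measure.setIntegral_toReal_rnDeriv h1 (projN N ⁻¹' S)]
    set T : Finset (Fin N → Bool) := S.toFinite.toFinset with hT
    have huni : projN N ⁻¹' S = ⋃ y ∈ T, projN N ⁻¹' {y} := by
      ext x
      simp only [Set.mem_preimage, Set.mem_iUnion, Set.mem_singleton_iff, hT,
        Set.Finite.mem_toFinset]
      exact ⟨fun hx => ⟨projN N x, hx, rfl⟩, fun ⟨y, hy, hxy⟩ => hxy ▸ hy⟩
    have hdis : Set.Pairwise (↑T) (Function.onFun Disjoint fun y => projN N ⁻¹' {y}) :=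
      fun y _ z _ hyz => (Set.disjoint_singleton.mpr hyz).preimage (projN N)
    have hpiece : ∀ y : Fin N → Bool,
        ∫ x in projN N ⁻¹' {y}, M N x ∂Q = (Q' (projN N ⁻¹' {y})).toReal := by
      intro y
      have hconst : Set.EqOn (M N)
          (fun _ => ∏ i : Fin N, (q' i (y i) / q i (y i))) (projN N ⁻¹' {y}) := by
        intro x hx
        have hx' : ∀ i : Fin N, x i = y i := fun i => congrFun hx i
        rw [hMfun N]
        show ∏ i : Fin N, (q' i.1 (projN N x i) / q i.1 (projN N x i)) = _
        exact Finset.prod_congr rfl fun i _ =>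
          by rw [show projN N x i = y i from hx' i]
      rw [setIntegral_congr_fun (measurable_projN N (measurableSet_singleton y)) hconst,
        setIntegral_const, measureReal_def, measure_projN_preimage_singleton hQ N y,
        measure_projN_preimage_singleton hQ' N y, smul_eq_mul,
        ENNReal.toReal_prod, ENNReal.toReal_prod]
      have e1 : ∀ i : Fin N, (ENNReal.ofReal (q i.1 (y i))).toReal = q i.1 (y i) :=
        fun i => ENNReal.toReal_ofReal (hq i.1 (y i)).le
      have e2 : ∀ i : Fin N, (ENNReal.ofReal (q' i.1 (y i))).toReal = q' i.1 (y i) :=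
        fun i => ENNReal.toReal_ofReal (hq' i.1 (y i)).le
      rw [Finset.prod_congr rfl fun i _ => e1 i, Finset.prod_congr rfl fun i _ => e2 i,
        ← Finset.prod_mul_distrib]
      exact Finset.prod_congr rfl fun i _ => by
        rw [mul_comm, div_mul_cancel₀ _ (hq i.1 (y i)).ne']
    rw [huni, integral_biUnion_finset T
        (fun y _ => (measurable_projN N) (measurableSet_singleton y)) hdis
        (fun y _ => (hMint N).integrableOn), measureReal_def,
      measure_biUnion_finset hdis
        (fun y _ => (measurable_projN N) (measurableSet_singleton y)),
      ENNReal.toReal_sum (fun y _ => measure_ne_top _ _)]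
    exact Finset.sum_congr rfl fun y _ => hpiece y
  -- conditional expectation identification
  have hcond : ∀ N : ℕ, M N =ᵐ[Q] Q[D | filtN N] := by
    intro N
    refine ae_eq_condExp_of_forall_setIntegral_eq (filtN.le N) hDint
      (fun s _ _ => (hMint N).integrableOn) (fun s hs _ => h_eq N s hs) ?_
    exact StronglyMeasurable.aestronglyMeasurable ((hMmeasF N).stronglyMeasurable)
  -- Levy's upward theorem
  have hDmeas : StronglyMeasurable[⨆ N, (filtN N : MeasurableSpace (ℕ → Bool))] D := by
    rw [iSup_filtN]
    exact (Measure.measurable_rnDeriv Q' Q).ennreal_toReal.stronglyMeasurable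
  have hlevy := hDint.tendsto_ae_condExp hDmeas
  haveI : Q'.HaveLebesgueDecomposition Q := Measure.haveLebesgueDecomposition_of_sigmaFinite _ _
  have hpos := h2.ae_le (Measure.rnDeriv_pos h1)
  have hfin := Measure.rnDeriv_lt_top Q' Q
  filter_upwards [hlevy, ae_all_iff.2 hcond, hpos, hfin] with x hx hMx hxpos hxfin
  have hDpos : 0 < D x := ENNReal.toReal_pos hxpos.ne' hxfin.ne
  have hMten : Tendsto (fun N => M N x) atTop (𝓝 (D x)) :=
    hx.congr fun N => (hMx N).symm
  refine ⟨Real.log (D x), ?_⟩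
  have hlog : Tendsto (fun N => Real.log (M N x)) atTop (𝓝 (Real.log (D x))) :=
    ((Real.continuousAt_log hDpos.ne').tendsto.comp hMten)
  refine hlog.congr fun N => ?_
  rw [hMdef]
  exact Real.log_prod fun i _ => (div_pos (hq' _ _) (hq _ _)).ne'

/-! ### The two-sided side -/

lemma measurable_shift (n : ℤ) : Measurable (shift n) :=
  measurable_pi_lambda _ fun _ => measurable_pi_apply _

lemma shift_shift (a b : ℤ) (x : ℤ → Bool) : shift a (shift b x) = shift (a + b) x := by
  funext k
  simp [shift, add_assoc]

lemma map_shift_zero (P : Measure (ℤ → Bool)) : P.map (shift 0) = P := by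
  have h : shift 0 = id := by
    funext x k
    simp [shift]
  rw [h, Measure.map_id]

lemma map_map_shift (P : Measure (ℤ → Bool)) (a b : ℤ) :
    (P.map (shift a)).map (shift b) = P.map (shift (a + b)) := by
  rw [Measure.map_map (measurable_shift b) (measurable_shift a)]
  congr 1
  funext x
  rw [Function.comp_apply, shift_shift, add_comm]

lemma map_shift_ac {P : Measure (ℤ → Bool)} (hns : Nonsingular P) (m : ℕ) :
    P.map (shift (-(m : ℤ))) ≪ P ∧ P ≪ P.map (shift (-(m : ℤ))) := by
  have hm1 : P.map (shift (-1)) ≪ P := by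
    have h := hns.1.map (measurable_shift (-1))
    rwa [map_map_shift, show (1 + -1 : ℤ) = 0 by ring, map_shift_zero] at h
  have h1m : P ≪ P.map (shift (-1)) := by
    have h := hns.2.map (measurable_shift (-1))
    rwa [map_map_shift, show (1 + -1 : ℤ) = 0 by ring, map_shift_zero] at h
  induction m with
  | zero =>
      rw [show (-((0 : ℕ) : ℤ)) = 0 by simp, map_shift_zero]
      exact ⟨Measure.AbsolutelyContinuous.rfl, Measure.AbsolutelyContinuous.rfl⟩
  | succ m ih =>
      have e : P.map (shift (-((m + 1 : ℕ) : ℤ))) = (P.map (shift (-(m : ℤ)))).map (shift (-1)) := by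
        rw [map_map_shift, show (-(m : ℤ) + -1) = (-((m + 1 : ℕ) : ℤ)) by push_cast; ring]
      constructor
      · rw [e]
        exact (ih.1.map (measurable_shift (-1))).trans hm1
      · rw [e]
        exact h1m.trans (ih.2.map (measurable_shift (-1)))

/-- The projection `X → X⁺` shifted by `m`. -/
def Fm (m : ℕ) (x : ℤ → Bool) : ℕ → Bool := fun i => x ((i : ℤ) + 1 - (m : ℤ))

lemma measurable_Fm (m : ℕ) : Measurable (Fm m) :=
  measurable_pi_lambda _ fun _ => measurable_pi_apply _

lemma isProductMeasureN_mapFm {P : Measure (ℤ → Bool)} {p : ℤ → Bool → ℝ}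
    (hP : IsProductMeasure P p) (m : ℕ) :
    IsProductMeasureN (P.map (Fm m)) (fun i b => p ((i : ℤ) + 1 - (m : ℤ)) b) := by
  haveI := hP.1
  refine ⟨Measure.isProbabilityMeasure_map (measurable_Fm m).aemeasurable,
    fun k b => hP.2.1 _ b, fun k => hP.2.2.1 _, ?_⟩
  intro s y
  rw [Measure.map_apply (measurable_Fm m) (measurableSet_cylN s y)]
  have hkey : ∀ i : ℕ, ((i : ℤ) + 1 - (m : ℤ) - 1 + (m : ℤ)).toNat = i := by
    intro i
    omega
  have hpre : Fm m ⁻¹' {x | ∀ i ∈ s, x i = y i}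
      = {x : ℤ → Bool | ∀ j ∈ s.image (fun i : ℕ => (i : ℤ) + 1 - (m : ℤ)),
          x j = y (j - 1 + (m : ℤ)).toNat} := by
    ext x
    simp only [Set.mem_preimage, Set.mem_setOf_eq, Finset.forall_mem_image, Fm]
    refine forall₂_congr fun i hi => ?_
    rw [hkey i]
  rw [hpre, hP.2.2.2, Finset.prod_image (fun i _ j _ hij => by omega)]
  refine Finset.prod_congr rfl fun i _ => ?_
  rw [hkey i]

lemma mapFm_ac {P : Measure (ℤ → Bool)} (hns : Nonsingular P) (m : ℕ) :
    P.map (Fm m) ≪ P.map (Fm 0) ∧ P.map (Fm 0) ≪ P.map (Fm m) := by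
  have hcomp : Fm m = Fm 0 ∘ shift (-(m : ℤ)) := by
    funext x i
    show x ((i : ℤ) + 1 - (m : ℤ)) = (shift (-(m : ℤ)) x) ((i : ℤ) + 1 - ((0 : ℕ) : ℤ))
    show x ((i : ℤ) + 1 - (m : ℤ)) = x ((i : ℤ) + 1 - ((0 : ℕ) : ℤ) + -(m : ℤ))
    rw [show (i : ℤ) + 1 - ((0 : ℕ) : ℤ) + -(m : ℤ) = (i : ℤ) + 1 - (m : ℤ) by push_cast; ring]
  have hmap : P.map (Fm m) = (P.map (shift (-(m : ℤ)))).map (Fm 0) := by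
    rw [Measure.map_map (measurable_Fm 0) (measurable_shift _), ← hcomp]
  constructor
  · rw [hmap]
    exact (map_shift_ac hns m).1.map (measurable_Fm 0)
  · rw [hmap]
    exact (map_shift_ac hns m).2.map (measurable_Fm 0)

lemma marginals_pos {P : Measure (ℤ → Bool)} {p : ℤ → Bool → ℝ}
    (hP : IsProductMeasure P p) (hhs : HalfStationary p) (hns : Nonsingular P) :
    ∀ (k : ℤ) (b : Bool), 0 < p k b := by
  have hsum := hP.2.2.1
  have hb : ∀ k : ℤ, k ≤ 0 → ∀ b, 0 < p k b := by
    intro k hk b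
    have hf := hhs k hk
    have ht : p k true = 1 / 2 := by have := hsum k; linarith
    cases b
    · rw [hf]; norm_num
    · rw [ht]; norm_num
  have hsingle : ∀ (k : ℤ) (b : Bool), P {x | x k = b} = ENNReal.ofReal (p k b) := by
    intro k b
    have h := hP.2.2.2 {k} (fun _ => b)
    have h2 : {x : ℤ → Bool | ∀ i ∈ ({k} : Finset ℤ), x i = (fun _ => b) i}
        = {x : ℤ → Bool | x k = b} := by
      ext x; simp
    rw [h2] at h
    rw [h, Finset.prod_singleton]
  have hmeasset : ∀ (k : ℤ) (b : Bool), MeasurableSet {x : ℤ → Bool | x k = b} :=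
    fun k b => by
      have h : {x : ℤ → Bool | x k = b} = (fun x : ℤ → Bool => x k) ⁻¹' {b} := rfl
      rw [h]
      exact (measurable_pi_apply k) (measurableSet_singleton b)
  have hstep : ∀ k : ℤ, (∀ b, 0 < p k b) → ∀ b, 0 < p (k + 1) b := by
    intro k hk b
    by_contra hle
    have h0 : p (k + 1) b = 0 := le_antisymm (not_lt.mp hle) (hP.2.1 _ _)
    have hA : P.map (shift 1) {x | x k = b} = 0 := by
      rw [Measure.map_apply (measurable_shift 1) (hmeasset k b)]
      have hh : shift 1 ⁻¹' {x : ℤ → Bool | x k = b} = {x : ℤ → Bool | x (k + 1) = b} := rfl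
      rw [hh, hsingle, h0, ENNReal.ofReal_zero]
    have hz := hns.1 hA
    rw [hsingle] at hz
    rw [ENNReal.ofReal_eq_zero] at hz
    exact absurd hz (not_le.mpr (hk b))
  intro k b
  rcases le_or_gt k 0 with hk | hk
  · exact hb k hk b
  · have hgen : ∀ n : ℤ, 0 ≤ n → ∀ b, 0 < p n b := fun n =>
      Int.le_induction (hb 0 le_rfl) (fun k _ ih => hstep k ih) n
    exact hgen k hk.le b

lemma oneShift_iter_apply (x : ℕ → Bool) (n i : ℕ) : (oneShift^[n] x) i = x (i + n) := by
  induction n generalizing x with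
  | zero => simp
  | succ n ih =>
      rw [Function.iterate_succ_apply, ih (oneShift x)]
      show x (i + n + 1) = x (i + (n + 1))
      rw [Nat.add_assoc]

lemma pointwise_key (p : ℤ → Bool → ℝ) (hpos : ∀ k b, 0 < p k b)
    (h0 : ∀ b : Bool, p 0 b = 1 / 2) (x : ℕ → Bool)
    (hconv : ∀ m : ℕ, ∃ L : ℝ, Tendsto (fun N : ℕ => ∑ i ∈ Finset.range N,
        Real.log (p ((i : ℤ) + 1 - (m : ℤ)) (x i) / p ((i : ℤ) + 1) (x i))) atTop (𝓝 L))
    (h : ∃ n, x n = false) :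
    (∀ n : ℕ, n ≤ Nat.find h →
      Tendsto (fun M : ℕ => ∑ i ∈ Finset.range M,
          Real.log (p (i : ℤ) ((oneShift^[n] x) i) / p ((i : ℤ) + 1) ((oneShift^[n] x) i)))
        atTop (nhds (Phi p (oneShift^[n] x))) ∧
      Tendsto (fun M : ℕ => ∑ i ∈ Finset.range M,
          Real.log (p (i : ℤ) ((oneShift^[n] (odometer x)) i) /
            p ((i : ℤ) + 1) ((oneShift^[n] (odometer x)) i)))
        atTop (nhds (Phi p (oneShift^[n] (odometer x))))) ∧
    ∑ n ∈ Finset.range (Nat.find h + 1),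
        (Phi p (oneShift^[n] x) - Phi p (oneShift^[n] (odometer x)))
      = Real.log (tauDeriv p x) := by
  classical
  set lq : ℤ → Bool → ℝ := fun k b => Real.log (p k b) with hlq
  have hld : ∀ (k k' : ℤ) (b : Bool), Real.log (p k b / p k' b) = lq k b - lq k' b :=
    fun k k' b => Real.log_div (hpos k b).ne' (hpos k' b).ne'
  -- partial sums of the `m`-th log-likelihood series
  set S : ℕ → ℕ → ℝ := fun m N => ∑ i ∈ Finset.range N,
    (lq ((i : ℤ) + 1 - (m : ℤ)) (x i) - lq ((i : ℤ) + 1) (x i)) with hSdef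
  have hS : ∀ m : ℕ, ∃ L : ℝ, Tendsto (S m) atTop (𝓝 L) := by
    intro m
    obtain ⟨L, hL⟩ := hconv m
    exact ⟨L, hL.congr fun N => Finset.sum_congr rfl fun i _ => hld _ _ _⟩
  choose L hL using hS
  -- partial sums of the series for `Phi` at `σⁿ x`
  set A : ℕ → ℕ → ℝ := fun n M => ∑ i ∈ Finset.range M,
    (lq (i : ℤ) (x (i + n)) - lq ((i : ℤ) + 1) (x (i + n))) with hAdef
  have hAeq : ∀ n M : ℕ, A n M = (S (n + 1) (M + n) - S (n + 1) n) - (S n (M + n) - S n n) := by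
    intro n M
    have key : ∀ m : ℕ, S m (M + n) - S m n = ∑ i ∈ Finset.range M,
        (lq (((n + i : ℕ) : ℤ) + 1 - (m : ℤ)) (x (n + i))
          - lq (((n + i : ℕ) : ℤ) + 1) (x (n + i))) := by
      intro m
      have h1 : S m (M + n) - S m n = ∑ i ∈ Finset.Ico n (M + n),
          (lq ((i : ℤ) + 1 - (m : ℤ)) (x i) - lq ((i : ℤ) + 1) (x i)) :=
        (Finset.sum_Ico_eq_sub _ (Nat.le_add_left n M)).symm
      rw [h1, Finset.sum_Ico_eq_sum_range]
      simp only [Nat.add_sub_cancel]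
    rw [key (n + 1), key n, ← Finset.sum_sub_distrib]
    refine Finset.sum_congr rfl fun i _ => ?_
    have e1 : ((n + i : ℕ) : ℤ) + 1 - ((n + 1 : ℕ) : ℤ) = (i : ℤ) := by push_cast; ring
    have e2 : ((n + i : ℕ) : ℤ) + 1 - (n : ℤ) = (i : ℤ) + 1 := by push_cast; ring
    have e3 : n + i = i + n := Nat.add_comm n i
    rw [e1, e2, e3]
    ring
  set Φ : ℕ → ℝ := fun n => (L (n + 1) - S (n + 1) n) - (L n - S n n) with hΦdef
  have hA : ∀ n, Tendsto (A n) atTop (𝓝 (Φ n)) := by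
    intro n
    have t1 : Tendsto (fun M => S (n + 1) (M + n)) atTop (𝓝 (L (n + 1))) :=
      (hL (n + 1)).comp (tendsto_add_atTop_nat n)
    have t2 : Tendsto (fun M => S n (M + n)) atTop (𝓝 (L n)) :=
      (hL n).comp (tendsto_add_atTop_nat n)
    exact (((t1.sub tendsto_const_nhds).sub (t2.sub tendsto_const_nhds)).congr
      fun M => (hAeq n M).symm)
  have hAx : ∀ n, (fun M : ℕ => ∑ i ∈ Finset.range M,
      Real.log (p (i : ℤ) ((oneShift^[n] x) i) / p ((i : ℤ) + 1) ((oneShift^[n] x) i))) = A n := by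
    intro n
    funext M
    exact Finset.sum_congr rfl fun i _ => by rw [oneShift_iter_apply, hld]
  have hPhix : ∀ n, Phi p (oneShift^[n] x) = Φ n := by
    intro n
    have ht : Tendsto (fun M : ℕ => ∑ i ∈ Finset.range M,
        Real.log (p (i : ℤ) ((oneShift^[n] x) i) / p ((i : ℤ) + 1) ((oneShift^[n] x) i)))
        atTop (𝓝 (Φ n)) := by
      rw [hAx n]; exact hA n
    rw [Phi]
    exact ht.limUnder_eq
  -- the odometer image
  set f := Nat.find h with hfdef
  have hxf : x f = false := Nat.find_spec h
  have hxlt : ∀ j, j < f → x j = true := by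
    intro j hj
    have hne := Nat.find_min h hj
    cases hxj : x j
    · exact absurd hxj hne
    · rfl
  set x' := odometer x with hx'def
  have hx'j : ∀ j, x' j = if j < f then false else if j = f then true else x j := by
    intro j
    rw [hx'def]
    unfold odometer
    rw [dif_pos h]
  have hx'f : x' f = true := by rw [hx'j]; simp
  set B : ℕ → ℕ → ℝ := fun n M => ∑ i ∈ Finset.range M,
    (lq (i : ℤ) (x' (i + n)) - lq ((i : ℤ) + 1) (x' (i + n))) with hBdef
  set G : ℕ → ℕ → ℝ := fun n i =>
    (lq (i : ℤ) (x' (i + n)) - lq ((i : ℤ) + 1) (x' (i + n)))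
      - (lq (i : ℤ) (x (i + n)) - lq ((i : ℤ) + 1) (x (i + n))) with hGdef
  have hG0 : ∀ n i, f < i + n → G n i = 0 := by
    intro n i hfi
    have hxx : x' (i + n) = x (i + n) := by
      rw [hx'j (i + n), if_neg (by omega), if_neg (by omega)]
    rw [hGdef]
    simp only [hxx]
    ring
  set c : ℕ → ℝ := fun n => ∑ i ∈ Finset.range (f + 1), G n i with hcdef
  have hBA : ∀ n M, f + 1 ≤ M → B n M = A n M + c n := by
    intro n M hM
    have h1 : B n M - A n M = ∑ i ∈ Finset.range M, G n i := by
      rw [hBdef, hAdef, ← Finset.sum_sub_distrib]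
    have h2 : ∑ i ∈ Finset.range M, G n i = c n := by
      rw [hcdef]
      refine (Finset.sum_subset (Finset.range_subset_range.mpr hM) fun i _ hi => ?_).symm
      rw [Finset.mem_range, not_lt] at hi
      exact hG0 n i (by omega)
    have := h1.trans h2
    linarith
  have hB : ∀ n, Tendsto (B n) atTop (𝓝 (Φ n + c n)) := by
    intro n
    refine ((hA n).add (tendsto_const_nhds (x := c n))).congr' ?_
    filter_upwards [eventually_ge_atTop (f + 1)] with M hM
    exact (hBA n M hM).symm
  have hBx : ∀ n, (fun M : ℕ => ∑ i ∈ Finset.range M,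
      Real.log (p (i : ℤ) ((oneShift^[n] x') i) / p ((i : ℤ) + 1) ((oneShift^[n] x') i)))
        = B n := by
    intro n
    funext M
    exact Finset.sum_congr rfl fun i _ => by rw [oneShift_iter_apply, hld]
  have hPhix' : ∀ n, Phi p (oneShift^[n] x') = Φ n + c n := by
    intro n
    have ht : Tendsto (fun M : ℕ => ∑ i ∈ Finset.range M,
        Real.log (p (i : ℤ) ((oneShift^[n] x') i) / p ((i : ℤ) + 1) ((oneShift^[n] x') i)))
        atTop (𝓝 (Φ n + c n)) := by
      rw [hBx n]; exact hB n
    rw [Phi]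
    exact ht.limUnder_eq
  constructor
  · intro n _
    constructor
    · rw [hPhix n, hAx n]
      exact hA n
    · rw [hPhix' n, hBx n]
      exact hB n
  -- the sum identity
  have hsum1 : ∑ n ∈ Finset.range (f + 1), (Phi p (oneShift^[n] x) - Phi p (oneShift^[n] x'))
      = ∑ n ∈ Finset.range (f + 1), (-c n) := by
    refine Finset.sum_congr rfl fun n _ => ?_
    rw [hPhix n, hPhix' n]
    ring
  rw [hsum1]
  -- double sum reindexing
  have hdouble : ∑ n ∈ Finset.range (f + 1), (-c n)
      = ∑ j ∈ Finset.range (f + 1), ∑ m ∈ Finset.range (j + 1), (-G (j - m) m) := by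
    have e1 : ∀ n, (-c n) = ∑ i ∈ Finset.range (f + 1), (-G n i) := by
      intro n
      rw [hcdef, ← Finset.sum_neg_distrib]
    calc ∑ n ∈ Finset.range (f + 1), (-c n)
        = ∑ n ∈ Finset.range (f + 1), ∑ i ∈ Finset.range (f + 1), (-G n i) :=
          Finset.sum_congr rfl fun n _ => e1 n
      _ = ∑ z ∈ Finset.range (f + 1) ×ˢ Finset.range (f + 1), (-G z.1 z.2) :=
          (Finset.sum_product' _ _ _).symm
      _ = ∑ z ∈ (Finset.range (f + 1) ×ˢ Finset.range (f + 1)).filter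
            (fun z => z.2 + z.1 ≤ f), (-G z.1 z.2) := by
          refine (Finset.sum_filter_of_ne fun z _ hz => ?_).symm
          by_contra hgt
          rw [hG0 z.1 z.2 (by omega), neg_zero] at hz
          exact hz rfl
      _ = ∑ w ∈ (Finset.range (f + 1) ×ˢ Finset.range (f + 1)).filter
            (fun w => w.2 ≤ w.1), (-G (w.1 - w.2) w.2) := by
          refine Finset.sum_nbij' (fun z => (z.2 + z.1, z.2)) (fun w => (w.1 - w.2, w.2))
            ?_ ?_ ?_ ?_ ?_
          · intro z hz
            simp only [Finset.mem_filter, Finset.mem_product, Finset.mem_range] at hz ⊢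
            omega
          · intro w hw
            simp only [Finset.mem_filter, Finset.mem_product, Finset.mem_range] at hw ⊢
            omega
          · intro z hz
            simp only [Finset.mem_filter, Finset.mem_product, Finset.mem_range] at hz
            have : z.2 + z.1 - z.2 = z.1 := by omega
            simp [this]
          · intro w hw
            simp only [Finset.mem_filter, Finset.mem_product, Finset.mem_range] at hw
            have : w.2 + (w.1 - w.2) = w.1 := by omega
            simp [this]
          · intro z hz
            have : z.2 + z.1 - z.2 = z.1 := by omega
            rw [this]
      _ = ∑ j ∈ Finset.range (f + 1), ∑ m ∈ Finset.range (f + 1),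
            (if m ≤ j then -G (j - m) m else 0) := by
          rw [← Finset.sum_product']
          rw [Finset.sum_filter]
      _ = ∑ j ∈ Finset.range (f + 1), ∑ m ∈ Finset.range (j + 1), (-G (j - m) m) := by
          refine Finset.sum_congr rfl fun j hj => ?_
          rw [Finset.mem_range] at hj
          rw [← Finset.sum_filter]
          refine Finset.sum_congr ?_ fun m _ => rfl
          ext m
          simp only [Finset.mem_filter, Finset.mem_range]
          omega
  rw [hdouble]
  -- evaluate the inner telescoping sums
  have hinner : ∀ j, j ≤ f → ∑ m ∈ Finset.range (j + 1), (-G (j - m) m)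
      = lq ((j : ℤ) + 1) (x' j) - lq ((j : ℤ) + 1) (x j) := by
    intro j hj
    have hGjm : ∀ m, m ≤ j → (-G (j - m) m)
        = (lq (m : ℤ) (x j) - lq ((m : ℤ) + 1) (x j))
          - (lq (m : ℤ) (x' j) - lq ((m : ℤ) + 1) (x' j)) := by
      intro m hm
      have hmj : m + (j - m) = j := by omega
      rw [hGdef]
      simp only [hmj]
      ring
    rw [Finset.sum_congr rfl fun m hm => hGjm m (by rw [Finset.mem_range] at hm; omega)]
    rw [Finset.sum_sub_distrib]
    have htel : ∀ b : Bool, ∑ m ∈ Finset.range (j + 1),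
        (lq (m : ℤ) b - lq ((m : ℤ) + 1) b) = lq 0 b - lq ((j : ℤ) + 1) b := by
      intro b
      have hcast : ∀ m : ℕ, lq ((m : ℤ) + 1) b = lq (((m + 1 : ℕ) : ℤ)) b := by
        intro m
        congr 1
        all_goals try (push_cast; ring)
      rw [Finset.sum_congr rfl fun m _ => by rw [hcast m]]
      have hts := Finset.sum_range_sub' (fun m : ℕ => lq (m : ℤ) b) (j + 1)
      rw [hts]
      all_goals try (congr 2 <;> push_cast <;> ring)
    rw [htel (x j), htel (x' j)]
    have h00 : lq 0 (x j) = lq 0 (x' j) := by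
      rw [hlq]
      simp only [h0]
    rw [h00]
    ring
  rw [Finset.sum_congr rfl fun j hj =>
    hinner j (by rw [Finset.mem_range] at hj; omega)]
  -- evaluate the outer sum
  rw [Finset.sum_range_succ]
  have hterm : ∀ j ∈ Finset.range f,
      (lq ((j : ℤ) + 1) (x' j) - lq ((j : ℤ) + 1) (x j))
        = (lq ((j : ℤ) + 1) false - lq ((j : ℤ) + 1) true) := by
    intro j hj
    rw [Finset.mem_range] at hj
    rw [hx'j j, if_pos hj, hxlt j hj]
  rw [Finset.sum_congr rfl hterm, hxf, hx'f]
  -- unfold tauDeriv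
  have htau : tauDeriv p x
      = (p ((f : ℤ) + 1) true / p ((f : ℤ) + 1) false) *
        ∏ i ∈ Finset.range f, (p ((i : ℤ) + 1) false / p ((i : ℤ) + 1) true) := by
    rw [hx'def] at *
    unfold tauDeriv
    rw [dif_pos h]
  rw [htau, Real.log_mul (div_pos (hpos _ _) (hpos _ _)).ne'
      (Finset.prod_pos fun i _ => div_pos (hpos _ _) (hpos _ _)).ne',
    Real.log_prod fun i _ => (div_pos (hpos _ _) (hpos _ _)).ne',
    Real.log_div (hpos _ _).ne' (hpos _ _).ne',
    Finset.sum_congr rfl fun (i : ℕ) (_ : i ∈ Finset.range f) =>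
      Real.log_div (hpos ((i : ℤ) + 1) false).ne' (hpos ((i : ℤ) + 1) true).ne']
  rw [hlq]
  ring

/-- For a nonsingular half-stationary shift, the tail cocycle
`ψ_φ(x) = ∑_{n=0}^{φ(x)−1} [φ(σⁿx) − φ(σⁿ(τx))]` built from
`φ(y) = ∑_{k=1}^∞ log (P_{k−1}(y_k)/P_k(y_k))` satisfies `ψ_φ = log τ'` a.e.
(here `Nat.find h + 1` is `φ(x) = min {n ≥ 1 : x_n = 0}`, `oneShift` is `σ`, and the
partial sums of the series defining `Phi` converge at each point used). -/
theorem tail_cocycle_eq_log_tauDeriv (P : Measure (ℤ → Bool)) (p : ℤ → Bool → ℝ)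
    (hP : IsProductMeasure P p) (hhs : HalfStationary p) (hns : Nonsingular P)
    (Pp : Measure (ℕ → Bool))
    (hPp : IsProductMeasureN Pp fun i b => p ((i : ℤ) + 1) b) :
    ∀ᵐ x ∂Pp, ∀ h : ∃ n, x n = false,
      (∀ n : ℕ, n ≤ Nat.find h →
        Tendsto (fun M : ℕ => ∑ i ∈ Finset.range M,
            Real.log (p (i : ℤ) ((oneShift^[n] x) i) / p ((i : ℤ) + 1) ((oneShift^[n] x) i)))
          atTop (nhds (Phi p (oneShift^[n] x))) ∧
        Tendsto (fun M : ℕ => ∑ i ∈ Finset.range M,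
            Real.log (p (i : ℤ) ((oneShift^[n] (odometer x)) i) /
              p ((i : ℤ) + 1) ((oneShift^[n] (odometer x)) i)))
          atTop (nhds (Phi p (oneShift^[n] (odometer x))))) ∧
      ∑ n ∈ Finset.range (Nat.find h + 1),
          (Phi p (oneShift^[n] x) - Phi p (oneShift^[n] (odometer x)))
        = Real.log (tauDeriv p x) := by
  haveI := hPp.1
  have hpos : ∀ (k : ℤ) (b : Bool), 0 < p k b := marginals_pos hP hhs hns
  have h0 : ∀ b : Bool, p 0 b = 1 / 2 := by
    intro b
    have hf := hhs 0 le_rfl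
    have hsum := hP.2.2.1 0
    cases b
    · exact hf
    · linarith
  have hprod0 : IsProductMeasureN (P.map (Fm 0)) fun i b => p ((i : ℤ) + 1) b := by
    have h := isProductMeasureN_mapFm hP 0
    simpa using h
  have hPp0 : Pp = P.map (Fm 0) := productMeasureN_unique hPp hprod0
  have hconv : ∀ᵐ x ∂Pp, ∀ m : ℕ, ∃ L : ℝ, Tendsto (fun N : ℕ => ∑ i ∈ Finset.range N,
      Real.log (p ((i : ℤ) + 1 - (m : ℤ)) (x i) / p ((i : ℤ) + 1) (x i))) atTop (𝓝 L) := by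
    rw [ae_all_iff]
    intro m
    have hac1 : P.map (Fm m) ≪ Pp := by rw [hPp0]; exact (mapFm_ac hns m).1
    have hac2 : Pp ≪ P.map (Fm m) := by rw [hPp0]; exact (mapFm_ac hns m).2
    exact core hPp (isProductMeasureN_mapFm hP m) (fun i b => hpos _ _)
      (fun i b => hpos _ _) hac1 hac2
  filter_upwards [hconv] with x hx
  exact fun h => pointwise_key p hpos h0 x hx h


end NSB
end
end

section
/- For k ≥ 1 define λ_n^{(k)} = 1 + n/2^k for 0 ≤ n ≤ 2^{k−1}, λ_n^{(k)} = 2 − n/2^k for 2^{k−1} ≤ n ≤ 2^k, and λ_n^{(k)} = 1 for all other n ∈ ℤ, and let P^{(k)} = ∏_{n∈ℤ} P_n^{(k)} be the product measure on X = {0,1}^ℤ with P_n^{(k)}(1) = λ_n^{(k)}/(1 + λ_n^{(k)}) = 1 − P_n^{(k)}(0). Then the shift T is nonsingular with respect to each P^{(k)}, and for every m ≥ 1 and t ≥ 1 there exists k such that P^{(k)}( { x : (d(P^{(k)}∘T^l)/dP^{(k)})(x) ≥ e^{−2^{−t}} for all 1 ≤ l ≤ m } ) ≥ 1 − 2^{−t}.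 -/
open MeasureTheory Filter Topology
open scoped ENNReal

noncomputable section

namespace NSB

/-- `λ_n^{(k)}`: `1 + n/2^k` for `0 ≤ n ≤ 2^{k−1}`, `2 − n/2^k` for `2^{k−1} ≤ n ≤ 2^k`,
and `1` otherwise. -/
def lam (k : ℕ) (n : ℤ) : ℝ :=
  if 0 ≤ n ∧ n ≤ 2 ^ (k - 1) then 1 + (n : ℝ) / 2 ^ k
  else if 2 ^ (k - 1) ≤ n ∧ n ≤ 2 ^ k then 2 - (n : ℝ) / 2 ^ k
  else 1

/-- The marginals of `P^{(k)}`: `P_n^{(k)}(1) = λ_n^{(k)}/(1 + λ_n^{(k)}) = 1 − P_n^{(k)}(0)`. -/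
def pLam (k : ℕ) : ℤ → Bool → ℝ := fun n b =>
  if b then lam k n / (1 + lam k n) else 1 - lam k n / (1 + lam k n)





def extFn (s : Finset ℤ) (y : s → Bool) : ℤ → Bool :=
  fun i => if h : i ∈ s then y ⟨i, h⟩ else false

lemma extFn_coe (s : Finset ℤ) (y : s → Bool) (i : s) : extFn s y (i : ℤ) = y i := by
  simp [extFn]

lemma extFn_mem (s : Finset ℤ) (y : s → Bool) {i : ℤ} (h : i ∈ s) :
    extFn s y i = y ⟨i, h⟩ := by simp [extFn, h]

lemma sum_prod_ext {R : Type*} [CommSemiring R] (s : Finset ℤ) (G : ℤ → Bool → R) :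
    ∑ y : s → Bool, ∏ i ∈ s, G i (extFn s y i) = ∏ i ∈ s, (G i false + G i true) := by
  classical
  have h1 : ∀ y : s → Bool, ∏ i ∈ s, G i (extFn s y i) = ∏ i : s, G (i : ℤ) (y i) := by
    intro y
    rw [← Finset.prod_coe_sort s (fun i => G i (extFn s y i))]
    exact Finset.prod_congr rfl (fun i _ => by rw [extFn_coe])
  simp_rw [h1]
  rw [← Finset.prod_coe_sort s (fun i => G i false + G i true)]
  have := Finset.prod_univ_sum (fun _ : s => (Finset.univ : Finset Bool))
    (fun i b => G (i : ℤ) b)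
  rw [Fintype.piFinset_univ] at this
  rw [← this]
  exact Finset.prod_congr rfl (fun i _ => by simp [Fintype.sum_bool, add_comm])

lemma prod_one_add_le {ι : Type*} (s : Finset ι) (a : ι → ℝ) (h0 : ∀ i ∈ s, 0 ≤ a i)
    (hs : ∑ i ∈ s, a i ≤ 1/2) : ∏ i ∈ s, (1 + a i) ≤ 1 + 2 * ∑ i ∈ s, a i := by
  classical
  induction s using Finset.induction with
  | empty => simp
  | @insert j t hjt ih =>
    rw [Finset.prod_insert hjt, Finset.sum_insert hjt]
    rw [Finset.sum_insert hjt] at hs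
    have haj : 0 ≤ a j := h0 j (Finset.mem_insert_self j t)
    have h0' : ∀ i ∈ t, 0 ≤ a i := fun i hi => h0 i (Finset.mem_insert_of_mem hi)
    have hst : ∑ i ∈ t, a i ≤ 1/2 := by
      have : 0 ≤ a j := haj
      linarith
    have ht0 : 0 ≤ ∑ i ∈ t, a i := Finset.sum_nonneg h0'
    have := ih h0' hst
    nlinarith [this, haj, hst, ht0]


def cylSet (s : Finset ℤ) (y : ℤ → Bool) : Set (ℤ → Bool) := {x | ∀ i ∈ s, x i = y i}

lemma measurableSet_cyl (s : Finset ℤ) (y : ℤ → Bool) : MeasurableSet (cylSet s y) := by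
  have : cylSet s y = ⋂ i ∈ s, (fun x : ℤ → Bool => x i) ⁻¹' {y i} := by
    ext x; simp [cylSet]
  rw [this]
  exact MeasurableSet.biInter s.countable_toSet fun i _ =>
    measurable_pi_apply i (measurableSet_singleton (y i))

section ProdMeas
variable {P : Measure (ℤ → Bool)} {p : ℤ → Bool → ℝ}

lemma lintegral_det (hP : IsProductMeasure P p) (s : Finset ℤ) (φ : (ℤ → Bool) → ℝ≥0∞)
    (hφ : ∀ x x', (∀ i ∈ s, x i = x' i) → φ x = φ x') :
    ∫⁻ x, φ x ∂P = ∑ y : s → Bool, φ (extFn s y) * ∏ i ∈ s, ENNReal.ofReal (p i (extFn s y i)) := by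
  classical
  have hdec : ∀ x, φ x =
      ∑ y : s → Bool, Set.indicator (cylSet s (extFn s y)) (fun _ => φ (extFn s y)) x := by
    intro x
    rw [Finset.sum_eq_single (fun i : s => x (i : ℤ))]
    · rw [Set.indicator_of_mem]
      · exact (hφ (extFn s (fun i : s => x (i : ℤ))) x
          (fun i hi => by rw [extFn_mem s _ hi])).symm ▸ rfl
      · intro i hi
        rw [extFn_mem s _ hi]
    · intro y _ hy
      rw [Set.indicator_of_notMem]
      intro hx
      exact hy (funext fun i => by
        have := hx (i : ℤ) i.2
        rw [extFn_coe] at this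
        exact this.symm)
    · intro h; exact absurd (Finset.mem_univ _) h
  calc ∫⁻ x, φ x ∂P
      = ∫⁻ x, ∑ y : s → Bool,
          Set.indicator (cylSet s (extFn s y)) (fun _ => φ (extFn s y)) x ∂P :=
        lintegral_congr hdec
    _ = ∑ y : s → Bool, ∫⁻ x,
          Set.indicator (cylSet s (extFn s y)) (fun _ => φ (extFn s y)) x ∂P := by
        rw [lintegral_finset_sum]
        intro y _
        exact measurable_const.indicator (measurableSet_cyl _ _)
    _ = ∑ y : s → Bool, φ (extFn s y) * P (cylSet s (extFn s y)) := by
        refine Finset.sum_congr rfl fun y _ => ?_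
        rw [lintegral_indicator_const (measurableSet_cyl _ _)]
    _ = _ := by
        refine Finset.sum_congr rfl fun y _ => ?_
        rw [show cylSet s (extFn s y) = {x | ∀ i ∈ s, x i = extFn s y i} from rfl,
          hP.2.2.2 s (extFn s y)]

lemma measurableSet_det (s : Finset ℤ) (A : Set (ℤ → Bool))
    (hA : ∀ x x', (∀ i ∈ s, x i = x' i) → (x ∈ A ↔ x' ∈ A)) : MeasurableSet A := by
  classical
  have : A = ⋃ (y : s → Bool) (_ : extFn s y ∈ A), cylSet s (extFn s y) := by
    ext x
    simp only [Set.mem_iUnion]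
    constructor
    · intro hx
      refine ⟨fun i : s => x (i : ℤ), ?_, ?_⟩
      · exact (hA (extFn s (fun i : s => x (i : ℤ))) x
          (fun i hi => by rw [extFn_mem s _ hi])).mpr hx
      · intro i hi; rw [extFn_mem s _ hi]
    · rintro ⟨y, hy, hxy⟩
      exact (hA x (extFn s y) (fun i hi => (hxy i hi))).mpr hy
  rw [this]
  exact MeasurableSet.iUnion fun y => MeasurableSet.iUnion fun _ => measurableSet_cyl _ _

lemma measure_det (hP : IsProductMeasure P p) (s : Finset ℤ) (A : Set (ℤ → Bool))
    (hA : ∀ x x', (∀ i ∈ s, x i = x' i) → (x ∈ A ↔ x' ∈ A)) :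
    P A = ∑ y : s → Bool,
      A.indicator (fun _ => ∏ i ∈ s, ENNReal.ofReal (p i (extFn s y i))) (extFn s y) := by
  classical
  rw [← lintegral_indicator_one (measurableSet_det s A hA)]
  rw [lintegral_det hP s _ (fun x x' h => by
    by_cases hx : x ∈ A
    · rw [Set.indicator_of_mem hx, Set.indicator_of_mem ((hA x x' h).mp hx)]
      rfl
    · rw [Set.indicator_of_notMem hx,
        Set.indicator_of_notMem (fun hx' => hx ((hA x x' h).mpr hx'))])]
  refine Finset.sum_congr rfl fun y _ => ?_
  by_cases hy : extFn s y ∈ A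
  · rw [Set.indicator_of_mem hy, Set.indicator_of_mem hy]; simp
  · rw [Set.indicator_of_notMem hy, Set.indicator_of_notMem hy]; simp

lemma isProductMeasure_map (hP : IsProductMeasure P p) (l : ℤ) :
    IsProductMeasure (P.map (shift (-l))) (fun i b => p (i - l) b) := by
  classical
  haveI := hP.1
  refine ⟨Measure.isProbabilityMeasure_map (measurable_shift (-l)).aemeasurable,
    fun k b => hP.2.1 _ b, fun k => hP.2.2.1 _, fun s y => ?_⟩
  rw [show {x : ℤ → Bool | ∀ i ∈ s, x i = y i} = cylSet s y from rfl,
    Measure.map_apply (measurable_shift (-l)) (measurableSet_cyl s y)]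
  have hpre : shift (-l) ⁻¹' (cylSet s y)
      = cylSet (s.image (fun i => i - l)) (fun j => y (j + l)) := by
    ext x
    simp only [Set.mem_preimage, cylSet, Set.mem_setOf_eq, shift, Finset.mem_image]
    constructor
    · rintro h j ⟨i, hi, rfl⟩
      have := h i hi
      rw [show i + -l = i - l by ring] at this
      rw [this]
      congr 1
      ring
    · intro h i hi
      have := h (i - l) ⟨i, hi, rfl⟩
      rw [show i - l + l = i by ring] at this
      rw [show i + -l = i - l by ring]
      exact this
  rw [hpre, show cylSet (s.image (fun i => i - l)) (fun j => y (j + l))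
    = {x | ∀ i ∈ s.image (fun i => i - l), x i = y (i + l)} from rfl, hP.2.2.2]
  rw [Finset.prod_image (by intro a _ b _ h; exact sub_left_injective h)]
  refine Finset.prod_congr rfl fun i _ => ?_
  rw [show i - l + l = i by ring]

lemma prod_eq_withDensity {Q : Measure (ℤ → Bool)} {q : ℤ → Bool → ℝ}
    (hP : IsProductMeasure P p) (hQ : IsProductMeasure Q q)
    (hpos : ∀ i b, 0 < p i b) (W : Finset ℤ)
    (hW : ∀ i ∉ W, ∀ b, q i b = p i b) :
    Q = P.withDensity (fun x => ∏ i ∈ W, ENNReal.ofReal (q i (x i) / p i (x i))) := by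
  classical
  haveI := hP.1
  haveI := hQ.1
  set f : (ℤ → Bool) → ℝ≥0∞ := fun x => ∏ i ∈ W, ENNReal.ofReal (q i (x i) / p i (x i)) with hf
  -- termwise identity
  have hterm : ∀ (u : Finset ℤ), W ⊆ u → ∀ x : ℤ → Bool,
      f x * ∏ i ∈ u, ENNReal.ofReal (p i (x i)) = ∏ i ∈ u, ENNReal.ofReal (q i (x i)) := by
    intro u hWu x
    have h1 : ∏ i ∈ u \ W, ENNReal.ofReal (p i (x i)) = ∏ i ∈ u \ W, ENNReal.ofReal (q i (x i)) :=
      Finset.prod_congr rfl fun i hi => by rw [hW i (Finset.mem_sdiff.mp hi).2]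
    have h2 : f x * ∏ i ∈ W, ENNReal.ofReal (p i (x i)) = ∏ i ∈ W, ENNReal.ofReal (q i (x i)) := by
      rw [hf, ← Finset.prod_mul_distrib]
      refine Finset.prod_congr rfl fun i _ => ?_
      rw [← ENNReal.ofReal_mul (div_nonneg (hQ.2.1 i (x i)) (hpos i (x i)).le),
        div_mul_cancel₀ _ (ne_of_gt (hpos i (x i)))]
    calc f x * ∏ i ∈ u, ENNReal.ofReal (p i (x i))
        = (∏ i ∈ u \ W, ENNReal.ofReal (p i (x i))) *
          (f x * ∏ i ∈ W, ENNReal.ofReal (p i (x i))) := by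
          rw [← Finset.prod_sdiff hWu]; ring
      _ = (∏ i ∈ u \ W, ENNReal.ofReal (q i (x i))) *
          (∏ i ∈ W, ENNReal.ofReal (q i (x i))) := by rw [h1, h2]
      _ = ∏ i ∈ u, ENNReal.ofReal (q i (x i)) := Finset.prod_sdiff hWu
  -- f is determined by coordinates in W
  have hfdet : ∀ (u : Finset ℤ), W ⊆ u → ∀ x x' : ℤ → Bool, (∀ i ∈ u, x i = x' i) → f x = f x' := by
    intro u hWu x x' h
    exact Finset.prod_congr rfl fun i hi => by rw [h i (hWu hi)]
  -- common value computation
  have key : ∀ (u : Finset ℤ), W ⊆ u → ∀ A : Set (ℤ → Bool),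
      (∀ x x', (∀ i ∈ u, x i = x' i) → (x ∈ A ↔ x' ∈ A)) →
      Q A = (P.withDensity f) A := by
    intro u hWu A hA
    have hAmeas := measurableSet_det u A hA
    rw [withDensity_apply f hAmeas, ← lintegral_indicator hAmeas]
    have hdet : ∀ x x', (∀ i ∈ u, x i = x' i) → A.indicator f x = A.indicator f x' := by
      intro x x' h
      by_cases hx : x ∈ A
      · rw [Set.indicator_of_mem hx, Set.indicator_of_mem ((hA x x' h).mp hx)]
        exact hfdet u hWu x x' h
      · rw [Set.indicator_of_notMem hx,
          Set.indicator_of_notMem (fun hx' => hx ((hA x x' h).mpr hx'))]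
    rw [lintegral_det hP u _ hdet, measure_det hQ u A hA]
    refine Finset.sum_congr rfl fun y _ => ?_
    by_cases hy : extFn u y ∈ A
    · rw [Set.indicator_of_mem hy, Set.indicator_of_mem hy, hterm u hWu]
    · rw [Set.indicator_of_notMem hy, Set.indicator_of_notMem hy, zero_mul]
  refine ext_of_generate_finite _ generateFrom_measurableCylinders.symm
    isPiSystem_measurableCylinders (fun B hB => ?_) ?_
  · obtain ⟨s, S, hS, rfl⟩ := (mem_measurableCylinders B).mp hB
    refine key (s ∪ W) Finset.subset_union_right _ (fun x x' h => ?_)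
    have : s.restrict x = s.restrict x' := by
      funext i
      exact h (i : ℤ) (Finset.mem_union_left _ i.2)
    simp only [cylinder, Set.mem_preimage, this]
  · exact key W (le_refl W) Set.univ (fun _ _ _ => Iff.rfl)

end ProdMeas


def lamInt (k : ℕ) (n : ℤ) : ℤ := max 0 (min (min n (2 ^ k - n)) (2 ^ (k - 1)))

lemma two_pow_int (k : ℕ) (hk : 1 ≤ k) : (2 : ℤ) ^ k = 2 * 2 ^ (k - 1) := by
  conv_lhs => rw [show k = (k - 1) + 1 by omega]
  rw [pow_succ, mul_comm]

lemma two_pow_real (k : ℕ) (hk : 1 ≤ k) : (2 : ℝ) ^ k = 2 * 2 ^ (k - 1) := by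
  conv_lhs => rw [show k = (k - 1) + 1 by omega]
  rw [pow_succ, mul_comm]

lemma lam_eq (k : ℕ) (hk : 1 ≤ k) (n : ℤ) :
    lam k n = 1 + (lamInt k n : ℝ) / 2 ^ k := by
  have h2 := two_pow_int k hk
  have hp : (0:ℤ) < 2 ^ (k - 1) := by positivity
  have hpos : (0:ℝ) < 2 ^ k := by positivity
  unfold lam lamInt
  split_ifs with h1 h2'
  · have : max 0 (min (min n (2 ^ k - n)) (2 ^ (k - 1))) = n := by omega
    rw [this]
  · have : max 0 (min (min n (2 ^ k - n)) (2 ^ (k - 1))) = 2 ^ k - n := by omega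
    rw [this]
    push_cast
    field_simp
    ring
  · have : max 0 (min (min n (2 ^ k - n)) (2 ^ (k - 1))) = 0 := by omega
    rw [this]
    norm_num

lemma lamInt_bounds (k : ℕ) (n : ℤ) : 0 ≤ lamInt k n ∧ lamInt k n ≤ 2 ^ (k - 1) := by
  have hp : (0:ℤ) < 2 ^ (k - 1) := by positivity
  unfold lamInt; omega

lemma lam_bounds (k : ℕ) (hk : 1 ≤ k) (n : ℤ) : 1 ≤ lam k n ∧ lam k n ≤ 3 / 2 := by
  rw [lam_eq k hk n]
  obtain ⟨h0, h1⟩ := lamInt_bounds k n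
  have h2r := two_pow_real k hk
  have hpos : (0:ℝ) < 2 ^ k := by positivity
  have hpos' : (0:ℝ) < 2 ^ (k-1) := by positivity
  have c0 : (0:ℝ) ≤ (lamInt k n : ℝ) := by exact_mod_cast h0
  have c1 : ((lamInt k n : ℤ) : ℝ) ≤ 2 ^ (k-1) := by exact_mod_cast h1
  have hhalf : ((lamInt k n : ℤ) : ℝ) / 2 ^ k ≤ 1 / 2 := by
    rw [div_le_iff₀ hpos, h2r]; nlinarith
  have hge : (0:ℝ) ≤ ((lamInt k n : ℤ) : ℝ) / 2 ^ k := by positivity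
  constructor <;> linarith

lemma lam_one (k : ℕ) (hk : 1 ≤ k) (n : ℤ) (h : n ≤ 0 ∨ (2:ℤ) ^ k ≤ n) : lam k n = 1 := by
  rw [lam_eq k hk n]
  have h2 := two_pow_int k hk
  have hp : (0:ℤ) < 2 ^ (k - 1) := by positivity
  have : lamInt k n = 0 := by unfold lamInt; omega
  rw [this]; norm_num

lemma lam_lip (k : ℕ) (hk : 1 ≤ k) (n : ℤ) (l : ℤ) (hl : 0 ≤ l) :
    |lam k n - lam k (n - l)| ≤ (l : ℝ) / 2 ^ k := by
  rw [lam_eq k hk n, lam_eq k hk (n - l)]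
  have h2 := two_pow_int k hk
  have hp : (0:ℤ) < 2 ^ (k - 1) := by positivity
  have key1 : lamInt k n - lamInt k (n - l) ≤ l := by unfold lamInt; omega
  have key2 : -l ≤ lamInt k n - lamInt k (n - l) := by unfold lamInt; omega
  have hpos : (0:ℝ) < 2 ^ k := by positivity
  have e : (1 + (lamInt k n : ℝ) / 2 ^ k) - (1 + (lamInt k (n-l) : ℝ) / 2 ^ k)
      = ((lamInt k n - lamInt k (n - l) : ℤ) : ℝ) / 2 ^ k := by push_cast; ring
  rw [e, abs_div, abs_of_pos hpos, div_le_div_iff_of_pos_right hpos, abs_le]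
  constructor
  · exact_mod_cast key2
  · exact_mod_cast key1


lemma one_add_lam_pos (k : ℕ) (hk : 1 ≤ k) (n : ℤ) : (0:ℝ) < 1 + lam k n := by
  have := (lam_bounds k hk n).1; linarith

lemma pLam_false_eq (k : ℕ) (n : ℤ) (hk : 1 ≤ k) :
    pLam k n false = 1 / (1 + lam k n) := by
  have h := one_add_lam_pos k hk n
  simp only [pLam, if_neg Bool.false_ne_true]
  field_simp
  ring

lemma pLam_bounds (k : ℕ) (hk : 1 ≤ k) (n : ℤ) (b : Bool) :
    2/5 ≤ pLam k n b ∧ pLam k n b ≤ 3/5 := by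
  obtain ⟨h1, h2⟩ := lam_bounds k hk n
  have hp := one_add_lam_pos k hk n
  cases b
  · rw [pLam_false_eq k n hk]
    rw [div_le_iff₀ hp, le_div_iff₀ hp]
    constructor <;> nlinarith
  · have et : pLam k n true = lam k n / (1 + lam k n) := by simp [pLam]
    rw [et, div_le_iff₀ hp, le_div_iff₀ hp]
    constructor <;> nlinarith

lemma pLam_pos (k : ℕ) (hk : 1 ≤ k) (n : ℤ) (b : Bool) : 0 < pLam k n b := by
  have := (pLam_bounds k hk n b).1; linarith

lemma pLam_sum (k : ℕ) (n : ℤ) : pLam k n false + pLam k n true = 1 := by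
  simp [pLam]

lemma pLam_true_eq (k : ℕ) (n : ℤ) : pLam k n true = 1 - pLam k n false := by
  have := pLam_sum k n; linarith

lemma pLam_diff (k : ℕ) (hk : 1 ≤ k) (n : ℤ) (l : ℤ) (hl : 0 ≤ l) (b : Bool) :
    |pLam k n b - pLam k (n - l) b| ≤ ((l : ℝ) / 2 ^ k) / 4 := by
  have key : |pLam k n false - pLam k (n - l) false| ≤ ((l : ℝ) / 2 ^ k) / 4 := by
    rw [pLam_false_eq k n hk, pLam_false_eq k (n - l) hk]
    have h1 := one_add_lam_pos k hk n
    have h2 := one_add_lam_pos k hk (n - l)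
    have hb1 := (lam_bounds k hk n).1
    have hb2 := (lam_bounds k hk (n - l)).1
    have e : 1 / (1 + lam k n) - 1 / (1 + lam k (n - l))
        = (lam k (n - l) - lam k n) / ((1 + lam k n) * (1 + lam k (n - l))) := by
      field_simp
      ring
    rw [e, abs_div]
    have h4 : (4:ℝ) ≤ |(1 + lam k n) * (1 + lam k (n - l))| := by
      rw [abs_of_pos (by positivity)]; nlinarith
    have hnum : |lam k (n - l) - lam k n| ≤ (l : ℝ) / 2 ^ k := by
      rw [abs_sub_comm]; exact lam_lip k hk n l hl
    have habs : (0:ℝ) < |(1 + lam k n) * (1 + lam k (n - l))| := by positivity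
    rw [div_le_div_iff₀ habs (by norm_num : (0:ℝ) < 4)] at *
    calc |lam k (n - l) - lam k n| * 4 ≤ ((l:ℝ)/2^k) * 4 := by linarith
      _ ≤ (l:ℝ)/2^k * |(1 + lam k n) * (1 + lam k (n - l))| := by
          have : (0:ℝ) ≤ (l:ℝ)/2^k := by positivity
          nlinarith
  cases b
  · exact key
  · rw [pLam_true_eq k n, pLam_true_eq k (n - l)]
    calc |1 - pLam k n false - (1 - pLam k (n - l) false)|
        = |pLam k n false - pLam k (n - l) false| := by rw [abs_sub_comm]; ring_nf
      _ ≤ _ := key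
lemma moment1_ge (p0 p1 q0 q1 : ℝ) (hp : p0 + p1 = 1) (hq : q0 + q1 = 1)
    (hq0 : 0 < q0) (hq1 : 0 < q1) :
    1 ≤ p0 ^ 2 / q0 + p1 ^ 2 / q1 := by
  have h0 : 2 * p0 - q0 ≤ p0 ^ 2 / q0 := by
    rw [le_div_iff₀ hq0]; nlinarith [sq_nonneg (p0 - q0)]
  have h1 : 2 * p1 - q1 ≤ p1 ^ 2 / q1 := by
    rw [le_div_iff₀ hq1]; nlinarith [sq_nonneg (p1 - q1)]
  linarith

lemma cube_div_le (q d : ℝ) (hq : 2/5 ≤ q) (hq2 : q ≤ 3/5) (hd : |d| ≤ 1/5) :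
    (q + d) ^ 3 / q ^ 2 ≤ q + 3 * d + 9 * d ^ 2 := by
  obtain ⟨hd1, hd2⟩ := abs_le.mp hd
  rw [div_le_iff₀ (by positivity)]
  have h1 : (0:ℝ) ≤ 9 * q ^ 2 - 3 * q - d := by nlinarith [mul_nonneg (by linarith : (0:ℝ) ≤ q - 2/5) (by linarith : (0:ℝ) ≤ q + 1/15)]
  nlinarith [mul_nonneg (sq_nonneg d) h1]

lemma moment2_le (p0 p1 q0 q1 : ℝ) (hp : p0 + p1 = 1) (hq : q0 + q1 = 1)
    (hp0 : 2/5 ≤ p0) (hp0' : p0 ≤ 3/5) (hp1 : 2/5 ≤ p1) (hp1' : p1 ≤ 3/5)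
    (hq0 : 2/5 ≤ q0) (hq0' : q0 ≤ 3/5) (hq1 : 2/5 ≤ q1) (hq1' : q1 ≤ 3/5) :
    p0 ^ 3 / q0 ^ 2 + p1 ^ 3 / q1 ^ 2 ≤ 1 + 18 * (p0 - q0) ^ 2 := by
  set d := p0 - q0 with hd
  have hdabs : |d| ≤ 1/5 := abs_le.mpr ⟨by linarith, by linarith⟩
  have hdabs' : |(-d)| ≤ 1/5 := by rwa [abs_neg]
  have e0 : p0 = q0 + d := by ring
  have e1 : p1 = q1 + (-d) := by linarith
  have c0 := cube_div_le q0 d hq0 hq0' hdabs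
  have c1 := cube_div_le q1 (-d) hq1 hq1' hdabs'
  rw [e0, e1]
  have : (-d)^2 = d^2 := by ring
  nlinarith [c0, c1]



section Main
variable {P : Measure (ℤ → Bool)}

lemma measurable_densf (q p : ℤ → Bool → ℝ) (W : Finset ℤ) :
    Measurable (fun x : ℤ → Bool => ∏ i ∈ W, ENNReal.ofReal (q i (x i) / p i (x i))) :=
  Finset.measurable_prod _ fun i _ =>
    (Measurable.of_discrete (f := fun b : Bool => ENNReal.ofReal (q i b / p i b))).comp
      (measurable_pi_apply i)

lemma absCont_withDensity (P : Measure (ℤ → Bool)) (f : (ℤ → Bool) → ℝ≥0∞)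
    (hf : Measurable f) (c : ℝ≥0∞) (hc : c ≠ 0) (hcf : ∀ x, c ≤ f x) :
    P ≪ P.withDensity f := by
  refine Measure.AbsolutelyContinuous.mk fun A hAm h0 => ?_
  rw [withDensity_apply f hAm] at h0
  have hle : c * P A ≤ ∫⁻ x in A, f x ∂P := by
    rw [← setLIntegral_const]
    exact setLIntegral_mono hf fun x _ => hcf x
  rw [h0] at hle
  rcases mul_eq_zero.mp (le_antisymm hle (by positivity)) with h | h
  · exact absurd h hc
  · exact h

lemma pLam_ratio_ge (k : ℕ) (hk : 1 ≤ k) (i j : ℤ) (b : Bool) :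
    (2:ℝ)/3 ≤ pLam k j b / pLam k i b := by
  have h1 := pLam_bounds k hk i b
  have h2 := pLam_bounds k hk j b
  rw [le_div_iff₀ (by linarith [h1.1] : (0:ℝ) < pLam k i b)]
  linarith

lemma densf_lower (k : ℕ) (hk : 1 ≤ k) (l : ℤ) (W : Finset ℤ) (x : ℤ → Bool) :
    ENNReal.ofReal ((2:ℝ)/3) ^ W.card
      ≤ ∏ i ∈ W, ENNReal.ofReal (pLam k (i - l) (x i) / pLam k i (x i)) := by
  rw [← Finset.prod_const]
  refine Finset.prod_le_prod' fun i _ => ?_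
  exact ENNReal.ofReal_le_ofReal (pLam_ratio_ge k hk i (i - l) (x i))

lemma map_shift_eq (hP : IsProductMeasure P (pLam k)) (hk : 1 ≤ k) (l : ℤ)
    (W : Finset ℤ) (hW : ∀ i : ℤ, i ∉ W → ∀ b, pLam k (i - l) b = pLam k i b) :
    P.map (shift (-l)) = P.withDensity
      (fun x => ∏ i ∈ W, ENNReal.ofReal (pLam k (i - l) (x i) / pLam k i (x i))) :=
  prod_eq_withDensity hP (isProductMeasure_map hP l) (fun i b => pLam_pos k hk i b) W hW

lemma lam_window (k : ℕ) (hk : 1 ≤ k) (l : ℤ) (a b : ℤ) (ha : a - 1 ≤ 0) (ha2 : a - 1 - l ≤ 0)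
    (hb : (2:ℤ)^k ≤ b + 1) (hb2 : (2:ℤ)^k ≤ b + 1 - l) :
    ∀ i : ℤ, i ∉ Finset.Icc a b → ∀ c, pLam k (i - l) c = pLam k i c := by
  intro i hi c
  rw [Finset.mem_Icc, not_and_or, not_le, not_le] at hi
  have h1 : lam k (i - l) = 1 := by
    apply lam_one k hk
    rcases hi with hi | hi
    · left; omega
    · right; omega
  have h2 : lam k i = 1 := by
    apply lam_one k hk
    rcases hi with hi | hi
    · left; omega
    · right; omega
  unfold pLam
  rw [h1, h2]

lemma nonsingular_of (hP : IsProductMeasure P (pLam k)) (hk : 1 ≤ k) : Nonsingular P := by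
  have hp : (0:ℤ) < 2^k := by positivity
  have hW := lam_window k hk (-1) (-1) ((2:ℤ)^k + 1) (by omega) (by omega)
    (by omega) (by omega)
  have hmap := map_shift_eq hP hk (-1) (Finset.Icc (-1) ((2:ℤ)^k + 1)) hW
  have hmap1 : P.map (shift 1) = P.withDensity
      (fun x => ∏ i ∈ Finset.Icc (-1:ℤ) ((2:ℤ)^k + 1),
        ENNReal.ofReal (pLam k (i - (-1)) (x i) / pLam k i (x i))) := by
    rw [show (1:ℤ) = -(-1:ℤ) by norm_num]
    exact hmap
  refine ⟨?_, ?_⟩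
  · rw [hmap1]
    refine absCont_withDensity P _ (measurable_densf _ _ _)
      (ENNReal.ofReal ((2:ℝ)/3) ^ (Finset.Icc (-1:ℤ) ((2:ℤ)^k + 1)).card)
      (pow_ne_zero _ (by simp)) (fun x => densf_lower k hk (-1) _ x)
  · rw [hmap1]
    exact withDensity_absolutelyContinuous _ _

lemma rnd_ae_eq (hP : IsProductMeasure P (pLam k)) (hk : 1 ≤ k) (l : ℕ)
    (W : Finset ℤ) (hW : ∀ i : ℤ, i ∉ W → ∀ b, pLam k (i - (l:ℤ)) b = pLam k i b) :
    rnd P l =ᵐ[P] fun x => ∏ i ∈ W, ENNReal.ofReal (pLam k (i - (l:ℤ)) (x i) / pLam k i (x i)) := by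
  haveI : IsProbabilityMeasure P := hP.1
  rw [rnd, map_shift_eq hP hk (l:ℤ) W hW]
  exact Measure.rnDeriv_withDensity P (measurable_densf _ _ _)

end Main

section Estimate
variable {P : Measure (ℤ → Bool)}

set_option maxHeartbeats 2000000 in
lemma key_estimate (m t : ℕ) (hm : 1 ≤ m) (ht : 1 ≤ t)
    (hP : IsProductMeasure P (pLam (3*m+3*t+3))) :
    ENNReal.ofReal (1 - (2:ℝ) ^ (-(t:ℤ))) ≤
      P {x | ∀ l : ℕ, 1 ≤ l → l ≤ m →
        ENNReal.ofReal (Real.exp (-(2:ℝ) ^ (-(t:ℤ)))) ≤ rnd P l x} := by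
  classical
  set k := 3*m+3*t+3 with hkdef
  have hk : 1 ≤ k := by omega
  haveI hprob : IsProbabilityMeasure P := hP.1
  set ε : ℝ := (2:ℝ) ^ (-(t:ℤ)) with hεdef
  have hεinv : ε = ((2:ℝ)^t)⁻¹ := by rw [hεdef, zpow_neg, zpow_natCast]
  have htpos : (0:ℝ) < 2^t := by positivity
  have hεpos : 0 < ε := by rw [hεinv]; positivity
  set c : ℝ := Real.exp (-ε) with hcdef
  have hcpos : 0 < c := Real.exp_pos _
  have hZ : (0:ℤ) < 2^k := by positivity
  have h2kpos : (0:ℝ) < 2^k := by positivity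
  -- numeric facts
  have h2k : (2:ℝ)^k = 8 * ((2:ℝ)^m)^3 * ((2:ℝ)^t)^3 := by
    rw [hkdef, show 3*m+3*t+3 = m*3 + (t*3 + 3) by ring, pow_add, pow_add, pow_mul, pow_mul]
    ring
  have hmM : (m:ℝ) ≤ (2:ℝ)^m := by exact_mod_cast (Nat.lt_two_pow_self (n := m)).le
  have hm1 : (1:ℝ) ≤ (m:ℝ) := by exact_mod_cast hm
  have hM1 : (1:ℝ) ≤ (2:ℝ)^m := one_le_pow₀ (by norm_num)
  have hT1 : (1:ℝ) ≤ (2:ℝ)^t := one_le_pow₀ (by norm_num)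
  have hMpos : (0:ℝ) < (2:ℝ)^m := by positivity
  have haux : ((2:ℝ)^m) ≤ ((2:ℝ)^m)^3 := by
    nlinarith [mul_nonneg (mul_nonneg (sub_nonneg.mpr hM1) hMpos.le)
      (by positivity : (0:ℝ) ≤ (2:ℝ)^m + 1)]
  have hmM3 : (m:ℝ) ≤ ((2:ℝ)^m)^3 := hmM.trans haux
  have hm3M : (m:ℝ)^3 ≤ ((2:ℝ)^m)^3 := pow_le_pow_left₀ (by positivity) hmM 3
  have hT3 : (1:ℝ) ≤ ((2:ℝ)^t)^3 := one_le_pow₀ hT1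
  have hM3pos : (0:ℝ) < ((2:ℝ)^m)^3 := by positivity
  have hMT : 8*((2:ℝ)^m)^3 ≤ 8*((2:ℝ)^m)^3*((2:ℝ)^t)^3 := by
    nlinarith [mul_nonneg hM3pos.le (sub_nonneg.mpr hT3)]
  have hm2M3 : (m:ℝ)^2 ≤ ((2:ℝ)^m)^3 := by
    have h1 : (m:ℝ)^2 ≤ ((2:ℝ)^m)^2 := pow_le_pow_left₀ (by positivity) hmM 2
    nlinarith [mul_nonneg (mul_nonneg (sub_nonneg.mpr hM1) hMpos.le) hMpos.le]
  have hN2 : 2*(m:ℝ) + 3 ≤ 2^k := by rw [h2k]; nlinarith [hmM3, hm1, hMT]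
  have hN3 : (9/2)*(m:ℝ)^2 ≤ 2^k := by rw [h2k]; nlinarith [hm2M3, hMT]
  have hN4 : (m:ℝ) * (ε⁻¹^2 * ((9/2)*(m:ℝ)^2/2^k)) ≤ ε := by
    have hεi : ε⁻¹ = (2:ℝ)^t := by rw [hεinv, inv_inv]
    rw [hεi, hεinv, h2k, inv_eq_one_div, le_div_iff₀ htpos]
    have h0 : (0:ℝ) < ((2:ℝ)^m)^3 := by positivity
    have key : (m:ℝ) * (((2:ℝ)^t)^2 * (9/2*(m:ℝ)^2/(8*((2:ℝ)^m)^3*((2:ℝ)^t)^3))) * (2:ℝ)^t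
        = (9/16) * ((m:ℝ)^3/((2:ℝ)^m)^3) := by
      field_simp
      ring
    rw [key]
    have hd1 : (m:ℝ)^3/((2:ℝ)^m)^3 ≤ 1 := by
      rw [div_le_one h0]
      exact hm3M
    linarith
  set W : Finset ℤ := Finset.Icc (-(m:ℤ) - 1) ((2:ℤ)^k + m + 1) with hWdef
  have hcard : (W.card : ℝ) = 2^k + 2*(m:ℝ) + 3 := by
    rw [hWdef, Int.card_Icc]
    have he : ((2:ℤ)^k + (m:ℤ) + 1 + 1 - (-(m:ℤ) - 1)) = 2^k + 2*m + 3 := by ring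
    rw [he]
    have hnn : (0:ℤ) ≤ 2^k + 2*m + 3 := by positivity
    have h1 : (((2^k + 2*m + 3 : ℤ).toNat : ℤ) : ℝ) = (((2:ℤ)^k + 2*m + 3 : ℤ) : ℝ) := by
      rw [Int.toNat_of_nonneg hnn]
    push_cast at h1 ⊢
    linarith
  set g : ℕ → (ℤ → Bool) → ℝ :=
    fun l x => ∏ i ∈ W, (pLam k (i - (l:ℤ)) (x i) / pLam k i (x i)) with hgdef
  set F : ℕ → (ℤ → Bool) → ℝ≥0∞ :=
    fun l x => ∏ i ∈ W, ENNReal.ofReal (pLam k (i - (l:ℤ)) (x i) / pLam k i (x i)) with hFdef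
  have ppos : ∀ (i : ℤ) b, 0 < pLam k i b := fun i b => pLam_pos k hk i b
  have hFg : ∀ l x, F l x = ENNReal.ofReal (g l x) := by
    intro l x
    rw [hFdef, hgdef, ENNReal.ofReal_prod_of_nonneg
      (fun i _ => div_nonneg (ppos _ _).le (ppos _ _).le)]
  have hgpos : ∀ l x, 0 < g l x :=
    fun l x => Finset.prod_pos fun i _ => div_pos (ppos _ _) (ppos _ _)
  have hW : ∀ l : ℕ, l ≤ m → ∀ i : ℤ, i ∉ W → ∀ b, pLam k (i - (l:ℤ)) b = pLam k i b := by
    intro l hl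
    have hlZ : (l:ℤ) ≤ (m:ℤ) := by exact_mod_cast hl
    exact lam_window k hk l _ _ (by omega) (by omega) (by omega) (by omega)
  have hrnd : ∀ l : ℕ, l ≤ m → rnd P l =ᵐ[P] F l :=
    fun l hl => rnd_ae_eq hP hk l W (hW l hl)
  -- bad sets
  set Bad : ℕ → Set (ℤ → Bool) := fun l => {x | g l x < c} with hBaddef
  have hdetg : ∀ (l : ℕ) (x x' : ℤ → Bool), (∀ i ∈ W, x i = x' i) → g l x = g l x' := by
    intro l x x' h
    exact Finset.prod_congr rfl fun i hi => by rw [h i hi]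
  have hdetBad : ∀ (l : ℕ) (x x' : ℤ → Bool), (∀ i ∈ W, x i = x' i) →
      (x ∈ Bad l ↔ x' ∈ Bad l) := by
    intro l x x' h
    simp only [hBaddef, Set.mem_setOf_eq, hdetg l x x' h]
  -- per-l bound
  have hSl : ∀ l : ℕ, 1 ≤ l → l ≤ m →
      P (Bad l) ≤ ENNReal.ofReal (ε⁻¹^2 * ((9/2)*(m:ℝ)^2/2^k)) := by
    intro l hl1 hl2
    rw [measure_det hP W (Bad l) (hdetBad l)]
    have hconv : ∑ y : W → Bool, (Bad l).indicator
          (fun _ => ∏ i ∈ W, ENNReal.ofReal (pLam k i (extFn W y i))) (extFn W y)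
        = ENNReal.ofReal (∑ y : W → Bool,
            if extFn W y ∈ Bad l then ∏ i ∈ W, pLam k i (extFn W y i) else 0) := by
      rw [ENNReal.ofReal_sum_of_nonneg (fun y _ => by
        split
        · exact Finset.prod_nonneg fun i _ => (ppos _ _).le
        · exact le_refl 0)]
      refine Finset.sum_congr rfl fun y _ => ?_
      by_cases hy : extFn W y ∈ Bad l
      · rw [Set.indicator_of_mem hy, if_pos hy,
          ENNReal.ofReal_prod_of_nonneg (fun i _ => (ppos _ _).le)]
      · rw [Set.indicator_of_notMem hy, if_neg hy, ENNReal.ofReal_zero]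
    rw [hconv]
    apply ENNReal.ofReal_le_ofReal
    -- now a purely real estimate
    set r : ℤ → Bool → ℝ := fun i b => pLam k i b / pLam k (i - (l:ℤ)) b with hrdef
    have hrg : ∀ x : ℤ → Bool, (∏ i ∈ W, r i (x i)) * g l x = 1 := by
      intro x
      have hone : ∀ i ∈ W, r i (x i) * (pLam k (i - (l:ℤ)) (x i) / pLam k i (x i)) = 1 := by
        intro i _
        have h1 := (ppos i (x i)).ne'
        have h2 := (ppos (i - (l:ℤ)) (x i)).ne'
        rw [hrdef]
        field_simp
      rw [hgdef, ← Finset.prod_mul_distrib, Finset.prod_congr rfl hone, Finset.prod_const_one]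
    -- termwise Chebyshev-type bound
    have hterm : ∀ x : ℤ → Bool,
        (if x ∈ Bad l then ∏ i ∈ W, pLam k i (x i) else 0)
          ≤ ε⁻¹^2 * (((∏ i ∈ W, r i (x i)) - 1)^2 * ∏ i ∈ W, pLam k i (x i)) := by
      intro x
      have hprodp : (0:ℝ) ≤ ∏ i ∈ W, pLam k i (x i) :=
        Finset.prod_nonneg fun i _ => (ppos _ _).le
      by_cases hx : x ∈ Bad l
      · rw [if_pos hx]
        have hgc : g l x < c := hx
        have hg0 := hgpos l x
        have hgne : g l x ≠ 0 := ne_of_gt hg0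
        have hrx : (∏ i ∈ W, r i (x i)) = (g l x)⁻¹ := by
          rw [inv_eq_one_div, eq_div_iff hgne]
          exact hrg x
        have hce : c⁻¹ = Real.exp ε := by rw [hcdef, Real.exp_neg, inv_inv]
        have h1ε : 1 + ε ≤ (g l x)⁻¹ := by
          have h2 : c⁻¹ ≤ (g l x)⁻¹ := by
            apply inv_anti₀ hg0 hgc.le
          have h3 := Real.add_one_le_exp ε
          rw [hce] at h2
          linarith
        have hsq : ε^2 ≤ ((∏ i ∈ W, r i (x i)) - 1)^2 := by
          rw [hrx]
          have : ε ≤ (g l x)⁻¹ - 1 := by linarith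
          exact pow_le_pow_left₀ hεpos.le this 2
        have h1 : 1 ≤ ε⁻¹^2 * ((∏ i ∈ W, r i (x i)) - 1)^2 := by
          have hεne : ε ≠ 0 := ne_of_gt hεpos
          calc (1:ℝ) = ε⁻¹^2 * ε^2 := by field_simp
            _ ≤ ε⁻¹^2 * ((∏ i ∈ W, r i (x i)) - 1)^2 := by
                apply mul_le_mul_of_nonneg_left hsq (by positivity)
        calc ∏ i ∈ W, pLam k i (x i) = 1 * ∏ i ∈ W, pLam k i (x i) := (one_mul _).symm
          _ ≤ (ε⁻¹^2 * ((∏ i ∈ W, r i (x i)) - 1)^2) * ∏ i ∈ W, pLam k i (x i) :=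
              mul_le_mul_of_nonneg_right h1 hprodp
          _ = ε⁻¹^2 * (((∏ i ∈ W, r i (x i)) - 1)^2 * ∏ i ∈ W, pLam k i (x i)) := by ring
      · rw [if_neg hx]
        positivity
    -- sum the termwise bound
    have hstep1 : (∑ y : W → Bool,
          if extFn W y ∈ Bad l then ∏ i ∈ W, pLam k i (extFn W y i) else 0)
        ≤ ε⁻¹^2 * ∑ y : W → Bool,
            (((∏ i ∈ W, r i (extFn W y i)) - 1)^2 * ∏ i ∈ W, pLam k i (extFn W y i)) := by
      rw [Finset.mul_sum]
      exact Finset.sum_le_sum fun y _ => hterm (extFn W y)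
    -- expand the square
    have hexp : ∀ x : ℤ → Bool,
        ((∏ i ∈ W, r i (x i)) - 1)^2 * ∏ i ∈ W, pLam k i (x i)
          = (∏ i ∈ W, (pLam k i (x i) * r i (x i)^2))
            - 2 * (∏ i ∈ W, (pLam k i (x i) * r i (x i)))
            + ∏ i ∈ W, pLam k i (x i) := by
      intro x
      rw [Finset.prod_mul_distrib, Finset.prod_mul_distrib, Finset.prod_pow]
      ring
    have hVsplit : ∑ y : W → Bool,
          (((∏ i ∈ W, r i (extFn W y i)) - 1)^2 * ∏ i ∈ W, pLam k i (extFn W y i))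
        = (∑ y : W → Bool, ∏ i ∈ W, (pLam k i (extFn W y i) * r i (extFn W y i)^2))
          - 2 * (∑ y : W → Bool, ∏ i ∈ W, (pLam k i (extFn W y i) * r i (extFn W y i)))
          + ∑ y : W → Bool, ∏ i ∈ W, pLam k i (extFn W y i) := by
      rw [Finset.mul_sum, ← Finset.sum_sub_distrib, ← Finset.sum_add_distrib]
      exact Finset.sum_congr rfl fun y _ => hexp (extFn W y)
    rw [hVsplit] at hstep1
    -- identify the three sums as products
    have hsig2 := sum_prod_ext W (fun i b => pLam k i b * r i b^2)
    have hsig1 := sum_prod_ext W (fun i b => pLam k i b * r i b)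
    have hsig0 := sum_prod_ext W (fun i b => pLam k i b)
    rw [hsig2, hsig1, hsig0] at hstep1
    -- evaluate/bound the three products
    have hS0 : ∏ i ∈ W, (pLam k i false + pLam k i true) = 1 := by
      rw [Finset.prod_congr rfl (fun i _ => pLam_sum k i), Finset.prod_const_one]
    have hS1 : 1 ≤ ∏ i ∈ W, (pLam k i false * r i false + pLam k i true * r i true) := by
      rw [show (1:ℝ) = ∏ _i ∈ W, 1 from (Finset.prod_const_one).symm]
      refine Finset.prod_le_prod (fun i _ => by norm_num) (fun i _ => ?_)
      have h1 := moment1_ge (pLam k i false) (pLam k i true)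
        (pLam k (i - (l:ℤ)) false) (pLam k (i - (l:ℤ)) true)
        (pLam_sum k i) (pLam_sum k (i - (l:ℤ)))
        (ppos _ false) (ppos _ true)
      calc (1:ℝ) ≤ pLam k i false^2 / pLam k (i-(l:ℤ)) false
            + pLam k i true^2 / pLam k (i-(l:ℤ)) true := h1
        _ = pLam k i false * r i false + pLam k i true * r i true := by
            rw [hrdef]; ring
    -- second moment bound
    set d : ℤ → ℝ := fun i => pLam k i false - pLam k (i - (l:ℤ)) false with hddef
    have hdbound : ∀ i : ℤ, |d i| ≤ (m:ℝ)/2^k/4 := by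
      intro i
      have h := pLam_diff k hk i (l:ℤ) (by positivity) false
      have hlm : ((l:ℤ):ℝ) ≤ (m:ℝ) := by exact_mod_cast hl2
      calc |d i| ≤ (((l:ℤ):ℝ))/2^k/4 := h
        _ ≤ (m:ℝ)/2^k/4 := by gcongr
    have hsum2 : ∑ i ∈ W, 18 * (d i)^2 ≤ (9/4)*(m:ℝ)^2/2^k := by
      have hsum : ∑ i ∈ W, 18 * (d i)^2 ≤ (W.card : ℝ) * (18 * ((m:ℝ)/2^k/4)^2) := by
        have hb : ∀ i ∈ W, 18 * (d i)^2 ≤ 18 * ((m:ℝ)/2^k/4)^2 := by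
          intro i _
          have hdi := hdbound i
          have h2 : (d i)^2 ≤ ((m:ℝ)/2^k/4)^2 := by
            rw [← sq_abs (d i)]
            exact pow_le_pow_left₀ (abs_nonneg _) hdi 2
          linarith
        have h := Finset.sum_le_card_nsmul W _ _ hb
        rwa [nsmul_eq_mul] at h
      have hcard2 : (W.card : ℝ) ≤ 2 * 2^k := by rw [hcard]; linarith
      calc ∑ i ∈ W, 18 * (d i)^2 ≤ (W.card : ℝ) * (18 * ((m:ℝ)/2^k/4)^2) := hsum
        _ ≤ (2*2^k) * (18 * ((m:ℝ)/2^k/4)^2) := by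
            apply mul_le_mul_of_nonneg_right hcard2 (by positivity)
        _ = (9/4)*(m:ℝ)^2/2^k := by field_simp; ring
    have hhalf : (9/4)*(m:ℝ)^2/2^k ≤ 1/2 := by
      rw [div_le_iff₀ h2kpos]
      nlinarith
    have hS2 : ∏ i ∈ W, (pLam k i false * r i false^2 + pLam k i true * r i true^2)
        ≤ 1 + 2 * ∑ i ∈ W, 18 * (d i)^2 := by
      calc ∏ i ∈ W, (pLam k i false * r i false^2 + pLam k i true * r i true^2)
          ≤ ∏ i ∈ W, (1 + 18 * (d i)^2) := by
            refine Finset.prod_le_prod (fun i _ => add_nonneg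
              (mul_nonneg (ppos _ _).le (sq_nonneg _))
              (mul_nonneg (ppos _ _).le (sq_nonneg _))) (fun i _ => ?_)
            have hb0 := pLam_bounds k hk i false
            have hb1 := pLam_bounds k hk i true
            have hq0 := pLam_bounds k hk (i - (l:ℤ)) false
            have hq1 := pLam_bounds k hk (i - (l:ℤ)) true
            have h2 := moment2_le (pLam k i false) (pLam k i true)
              (pLam k (i - (l:ℤ)) false) (pLam k (i - (l:ℤ)) true)
              (pLam_sum k i) (pLam_sum k (i - (l:ℤ)))
              hb0.1 hb0.2 hb1.1 hb1.2 hq0.1 hq0.2 hq1.1 hq1.2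
            calc pLam k i false * r i false^2 + pLam k i true * r i true^2
                = pLam k i false^3 / pLam k (i-(l:ℤ)) false^2
                  + pLam k i true^3 / pLam k (i-(l:ℤ)) true^2 := by rw [hrdef]; ring
              _ ≤ 1 + 18 * (d i)^2 := h2
        _ ≤ 1 + 2 * ∑ i ∈ W, 18 * (d i)^2 := by
            apply prod_one_add_le W _ (fun i _ => by positivity)
            linarith
    -- combine
    calc (∑ y : W → Bool,
          if extFn W y ∈ Bad l then ∏ i ∈ W, pLam k i (extFn W y i) else 0)
        ≤ ε⁻¹^2 * ((∏ i ∈ W, (pLam k i false * r i false^2 + pLam k i true * r i true^2))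
            - 2 * (∏ i ∈ W, (pLam k i false * r i false + pLam k i true * r i true))
            + ∏ i ∈ W, (pLam k i false + pLam k i true)) := hstep1
      _ ≤ ε⁻¹^2 * ((9/2)*(m:ℝ)^2/2^k) := by
          rw [hS0]
          have hεinv2 : (0:ℝ) ≤ ε⁻¹^2 := by positivity
          apply mul_le_mul_of_nonneg_left ?_ hεinv2
          have h1 : ∏ i ∈ W, (pLam k i false * r i false^2 + pLam k i true * r i true^2)
              - 2 * ∏ i ∈ W, (pLam k i false * r i false + pLam k i true * r i true) + 1
              ≤ 2 * ∑ i ∈ W, 18 * (d i)^2 := by linarith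
          have h2 : (2:ℝ) * ∑ i ∈ W, 18 * (d i)^2 ≤ 2 * ((9/4)*(m:ℝ)^2/2^k) := by linarith
          have h3 : (2:ℝ) * ((9/4)*(m:ℝ)^2/2^k) = (9/2)*(m:ℝ)^2/2^k := by ring
          linarith
  -- assemble
  set U : Set (ℤ → Bool) := ⋃ l ∈ Finset.Icc 1 m, Bad l with hUdef
  have hUmeas : MeasurableSet U :=
    (Finset.Icc 1 m).measurableSet_biUnion fun l _ => measurableSet_det W (Bad l) (hdetBad l)
  have hmcard : (Finset.Icc 1 m).card = m := by rw [Nat.card_Icc]; omega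
  have hPU : P U ≤ ENNReal.ofReal ε := by
    calc P U ≤ ∑ l ∈ Finset.Icc 1 m, P (Bad l) := measure_biUnion_finset_le _ _
      _ ≤ ∑ _l ∈ Finset.Icc 1 m, ENNReal.ofReal (ε⁻¹^2 * ((9/2)*(m:ℝ)^2/2^k)) :=
          Finset.sum_le_sum fun l hl => hSl l (Finset.mem_Icc.mp hl).1 (Finset.mem_Icc.mp hl).2
      _ = (Finset.Icc 1 m).card • ENNReal.ofReal (ε⁻¹^2 * ((9/2)*(m:ℝ)^2/2^k)) := by
          rw [Finset.sum_const]
      _ = ENNReal.ofReal ((m:ℝ) * (ε⁻¹^2 * ((9/2)*(m:ℝ)^2/2^k))) := by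
          rw [hmcard, nsmul_eq_mul, ← ENNReal.ofReal_natCast m,
            ← ENNReal.ofReal_mul (by positivity)]
      _ ≤ ENNReal.ofReal ε := ENNReal.ofReal_le_ofReal hN4
  set G : Set (ℤ → Bool) := {x | ∀ l : ℕ, 1 ≤ l → l ≤ m → c ≤ g l x} with hGdef
  have hGU : G = Uᶜ := by
    ext x
    simp only [hGdef, hUdef, hBaddef, Set.mem_setOf_eq, Set.mem_compl_iff,
      Set.mem_iUnion, Finset.mem_Icc, not_exists, not_lt]
    constructor
    · intro h l hl
      exact h l hl.1 hl.2
    · intro h l hl1 hl2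
      exact h l ⟨hl1, hl2⟩
  have hPG : ENNReal.ofReal (1 - ε) ≤ P G := by
    rw [hGU, prob_compl_eq_one_sub hUmeas]
    calc ENNReal.ofReal (1 - ε) = 1 - ENNReal.ofReal ε := by
          rw [ENNReal.ofReal_sub 1 hεpos.le, ENNReal.ofReal_one]
      _ ≤ 1 - P U := tsub_le_tsub_left hPU 1
  have hae : ∀ᵐ x ∂P, ∀ l : ℕ, l ≤ m → rnd P l x = F l x := by
    rw [MeasureTheory.ae_all_iff]
    intro l
    by_cases hl : l ≤ m
    · filter_upwards [hrnd l hl] with x hx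
      exact fun _ => hx
    · exact Filter.Eventually.of_forall fun x h => absurd h hl
  set N : Set (ℤ → Bool) := {x | ¬ ∀ l : ℕ, l ≤ m → rnd P l x = F l x} with hNdef
  have hN : P N = 0 := ae_iff.mp hae
  have hsub : G \ N ⊆ {x | ∀ l : ℕ, 1 ≤ l → l ≤ m →
      ENNReal.ofReal c ≤ rnd P l x} := by
    rintro x ⟨hxG, hxN⟩ l hl1 hl2
    have hQ : ∀ l : ℕ, l ≤ m → rnd P l x = F l x := not_not.mp hxN
    rw [hQ l hl2, hFg l x]
    exact ENNReal.ofReal_le_ofReal (hxG l hl1 hl2)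
  calc ENNReal.ofReal (1 - ε) ≤ P G := hPG
    _ = P (G \ N) := (measure_diff_null hN).symm
    _ ≤ P _ := measure_mono hsub

end Estimate


/-- The shift is nonsingular w.r.t. each `P^{(k)}`, and for all `m, t ≥ 1`
there is a `k` such that `P^{(k)}(T^{l'} ≥ e^{−2^{−t}} for all 1 ≤ l ≤ m) ≥ 1 − 2^{−t}`. -/
theorem pLam_small_derivatives (Pm : ℕ → Measure (ℤ → Bool))
    (hPm : ∀ k : ℕ, 1 ≤ k → IsProductMeasure (Pm k) (pLam k)) :
    (∀ k : ℕ, 1 ≤ k → Nonsingular (Pm k)) ∧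
    ∀ m : ℕ, 1 ≤ m → ∀ t : ℕ, 1 ≤ t → ∃ k : ℕ, 1 ≤ k ∧
      ENNReal.ofReal (1 - (2 : ℝ) ^ (-(t : ℤ))) ≤
        Pm k {x | ∀ l : ℕ, 1 ≤ l → l ≤ m →
          ENNReal.ofReal (Real.exp (-(2 : ℝ) ^ (-(t : ℤ)))) ≤ rnd (Pm k) l x} := by
  refine ⟨fun k hk => nonsingular_of (hPm k hk) hk, fun m hm t ht => ?_⟩
  exact ⟨3*m+3*t+3, by omega, key_estimate m t hm ht (hPm _ (by omega))⟩

end NSB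
end
end
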